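/- arXiv:2407.19786 — 7 statements merged into one kernel-verified Lean document; each statement's English description precedes it below -/
import Mathlib

section
/- Define the tropical logarithm of y ∈ ℝ by L(y) = inf_{k ≥ 1} (y + k(k+1)/2)/k (k ranging over positive integers). Then for every real x ≥ 1, the infimum defining L(E(x)) is attained and L(E(x)) = x; that is, the tropical logarithm inverts the scalar tropical exponential on [1, ∞). -/
noncomputable section

/-- The tropical factorial `k! = 1 ⊗ 2 ⊗ ⋯ ⊗ k = k(k+1)/2`. -/
def tfact (k : ℕ) : ℝ := k * (k + 1) / 2

/-- The scalar tropical exponential `E(a) = sup_k (k·a − k(k+1)/2)`. -/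
def Escalar (a : ℝ) : ℝ := ⨆ k : ℕ, ((k : ℝ) * a - tfact k)

/-- The tropical logarithm `L(y) = inf_{k ≥ 1} (y + k(k+1)/2)/k`. -/
def Lscalar (y : ℝ) : ℝ := ⨅ k : ℕ, (y + tfact (k + 1)) / (k + 1)

theorem stmt_2 (x : ℝ) (hx : 1 ≤ x) :
    Lscalar (Escalar x) = x ∧
      IsLeast {z : ℝ | ∃ k : ℕ, 1 ≤ k ∧ z = (Escalar x + tfact k) / k} x := by
  have hx0 : (0:ℝ) ≤ x := le_trans zero_le_one hx
  set n : ℕ := ⌊x⌋₊ with hn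
  have hn1 : 1 ≤ n := Nat.le_floor (by exact_mod_cast hx)
  have hnx : (n:ℝ) ≤ x := Nat.floor_le hx0
  have hxn : x < n + 1 := Nat.lt_floor_add_one x
  -- pointwise bound: the max of k*x - tfact k is at k = n
  have hb : ∀ k : ℕ, (k:ℝ) * x - tfact k ≤ (n:ℝ) * x - tfact n := by
    intro k
    have key : ((n:ℝ) * x - tfact n) - ((k:ℝ) * x - tfact k)
        = ((n:ℝ) - k) * (x - ((n:ℝ) + k + 1) / 2) := by
      unfold tfact; push_cast; ring
    rcases le_or_gt k n with h | h
    · rcases eq_or_lt_of_le h with rfl | h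
      · exact le_refl _
      · have hk : (k:ℝ) + 1 ≤ n := by exact_mod_cast h
        nlinarith
    · have hk : (n:ℝ) + 1 ≤ k := by exact_mod_cast h
      nlinarith
  have hbdd : BddAbove (Set.range fun k : ℕ => (k:ℝ) * x - tfact k) := by
    refine ⟨(n:ℝ) * x - tfact n, ?_⟩
    rintro y ⟨k, rfl⟩
    exact hb k
  have hE : Escalar x = (n:ℝ) * x - tfact n := by
    apply le_antisymm
    · exact ciSup_le hb
    · exact le_ciSup hbdd n
  have hnpos : (0:ℝ) < n := by exact_mod_cast hn1
  -- lower bound for the quotients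
  have hlow : ∀ k : ℕ, 1 ≤ k → x ≤ (Escalar x + tfact k) / k := by
    intro k hk
    have hkpos : (0:ℝ) < k := by exact_mod_cast hk
    have hEk : (k:ℝ) * x - tfact k ≤ Escalar x := le_ciSup hbdd k
    rw [le_div_iff₀ hkpos]
    linarith
  have hval : (Escalar x + tfact n) / n = x := by
    rw [hE]
    field_simp
    ring
  have hlow' : ∀ k : ℕ, x ≤ (Escalar x + tfact (k + 1)) / ((k : ℝ) + 1) := by
    intro k
    have := hlow (k + 1) (Nat.le_add_left 1 k)
    push_cast at this
    exact this
  constructor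
  · apply le_antisymm
    · have hc : ((n - 1 : ℕ) : ℝ) + 1 = (n : ℝ) := by
        have h := Nat.sub_add_cancel hn1
        exact_mod_cast congrArg (Nat.cast (R := ℝ)) h
      have h2 : Lscalar (Escalar x) ≤ (Escalar x + tfact ((n - 1) + 1)) / (((n - 1 : ℕ) : ℝ) + 1) := by
        rw [Lscalar]
        apply ciInf_le
        refine ⟨x, ?_⟩
        rintro y ⟨k, rfl⟩
        exact hlow' k
      rwa [Nat.sub_add_cancel hn1, hc, hval] at h2
    · rw [Lscalar]
      exact le_ciInf hlow'
  · exact ⟨⟨n, hn1, hval.symm⟩, by rintro z ⟨k, hk1, rfl⟩; exact hlow k hk1⟩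

end
end

section
/- For every A ∈ M_n(𝕋), the series defining the tropical matrix exponential converges; more precisely, there exists K ∈ ℕ such that e^(A) = I ⊕ ((−1) ⊗ A) ⊕ ((−3) ⊗ A^(2)) ⊕ ⋯ ⊕ ((−K(K+1)/2) ⊗ A^(K)), i.e. for each pair (i,j) the supremum sup_{k ≥ 0} ((A^(k))_{ij} − k(k+1)/2) is attained at some k ≤ K, so every entry of e^(A) lies in 𝕋. -/
noncomputable section

/-- Max-plus (tropical) matrix product over `𝕋 = ℝ ∪ {−∞}`, embedded in `EReal`. -/
def mpMul {ι κ μ : Type*} (A : Matrix ι κ EReal) (B : Matrix κ μ EReal) :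
    Matrix ι μ EReal :=
  fun i j => ⨆ k, A i k + B k j

/-- Max-plus identity matrix. -/
def mpId {ι : Type*} [DecidableEq ι] : Matrix ι ι EReal :=
  fun i j => if i = j then (0 : EReal) else ⊥

/-- Max-plus matrix power, `mpPow A 0 = mpId`. -/
def mpPow {ι : Type*} [DecidableEq ι] (A : Matrix ι ι EReal) : ℕ → Matrix ι ι EReal
  | 0 => mpId
  | k + 1 => mpMul (mpPow A k) A

/-- Tropical scalar multiple: add the real scalar `c` to every entry. -/
def smulE {ι κ : Type*} (c : ℝ) (A : Matrix ι κ EReal) : Matrix ι κ EReal :=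
  fun i j => (c : EReal) + A i j

/-- Max-plus matrix-vector product. -/
def mpMulVec {ι κ : Type*} (A : Matrix ι κ EReal) (x : κ → EReal) : ι → EReal :=
  fun i => ⨆ j, A i j + x j

/-- The tropical matrix exponential `e^(A) = ⨁_{k ≥ 0} (−k(k+1)/2) ⊗ A^(k)`. -/
def mexp {ι : Type*} [DecidableEq ι] (A : Matrix ι ι EReal) : Matrix ι ι EReal :=
  fun i j => ⨆ k : ℕ, (((-(tfact k) : ℝ) : EReal) + mpPow A k i j)

/-- Irreducibility: the digraph of `A` is strongly connected. -/
def mpIrreducible {ι : Type*} (A : Matrix ι ι EReal) : Prop :=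
  ∀ i j, Relation.TransGen (fun u v => A u v ≠ ⊥) i j

/-- Robustness: the orbit of every nonzero vector over `𝕋` hits an eigenvector. -/
def mpRobust {n : ℕ} (A : Matrix (Fin n) (Fin n) EReal) : Prop :=
  ∀ x : Fin n → EReal, (∀ i, x i ≠ ⊤) → x ≠ (fun _ => ⊥) →
    ∃ (r : ℕ) (lam : ℝ),
      mpMulVec (mpPow A r) x ≠ (fun _ => ⊥) ∧
      mpMulVec A (mpMulVec (mpPow A r) x) =
        fun i => (lam : EReal) + mpMulVec (mpPow A r) x i

/-- The weight of the closed walk `c 0 → c 1 → ⋯ → c m → c 0`. -/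
def cycWeight {ι : Type*} {m : ℕ} (A : Matrix ι ι EReal) (c : Fin (m + 1) → ι) : EReal :=
  ∑ i : Fin (m + 1), A (c i) (c (i + 1))

/-- `c` is a cycle (closed walk) in the digraph of `A`. -/
def isCycle {ι : Type*} {m : ℕ} (A : Matrix ι ι EReal) (c : Fin (m + 1) → ι) : Prop :=
  ∀ i, A (c i) (c (i + 1)) ≠ ⊥

/-- `lam` is the maximum cycle mean `λ(A)`: attained by some cycle and an upper bound. -/
def isMaxCycleMean {ι : Type*} (A : Matrix ι ι EReal) (lam : ℝ) : Prop :=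
  (∃ (m : ℕ) (c : Fin (m + 1) → ι), isCycle A c ∧
      cycWeight A c = ((((m : ℝ) + 1) * lam : ℝ) : EReal)) ∧
  ∀ (m : ℕ) (c : Fin (m + 1) → ι), isCycle A c →
      cycWeight A c ≤ ((((m : ℝ) + 1) * lam : ℝ) : EReal)

/-- A critical cycle: a cycle whose mean equals `lam = λ(A)`. -/
def isCritCycle {ι : Type*} {m : ℕ} (A : Matrix ι ι EReal) (lam : ℝ)
    (c : Fin (m + 1) → ι) : Prop :=
  isCycle A c ∧ cycWeight A c = ((((m : ℝ) + 1) * lam : ℝ) : EReal)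

/-- `v` is a vertex of the critical digraph `C(A)`. -/
def critVertex {ι : Type*} (A : Matrix ι ι EReal) (lam : ℝ) (v : ι) : Prop :=
  ∃ (m : ℕ) (c : Fin (m + 1) → ι) (k : Fin (m + 1)), isCritCycle A lam c ∧ c k = v

/-- `u → v` is an edge of the critical digraph `C(A)`. -/
def critEdge {ι : Type*} (A : Matrix ι ι EReal) (lam : ℝ) (u v : ι) : Prop :=
  ∃ (m : ℕ) (c : Fin (m + 1) → ι) (k : Fin (m + 1)),
    isCritCycle A lam c ∧ c k = u ∧ c (k + 1) = v

/-- `u` and `v` lie in the same strongly connected component of `C(A)`. -/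
def sameCritSCC {ι : Type*} (A : Matrix ι ι EReal) (lam : ℝ) (u v : ι) : Prop :=
  Relation.ReflTransGen (critEdge A lam) u v ∧ Relation.ReflTransGen (critEdge A lam) v u

lemma mpPow_le_bound {n : ℕ} (A : Matrix (Fin n) (Fin n) EReal) (M : ℝ)
    (h : ∀ i j, A i j ≤ (M : EReal)) (k : ℕ) (i j : Fin n) :
    mpPow A k i j ≤ (((k : ℝ) * M : ℝ) : EReal) := by
  induction k generalizing i j with
  | zero =>
    simp only [mpPow, mpId]
    split
    · norm_num
    · exact bot_le
  | succ k ih =>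
    simp only [mpPow, mpMul]
    apply iSup_le
    intro l
    refine le_trans (add_le_add (ih i l) (h l j)) ?_
    rw [← EReal.coe_add]
    apply EReal.coe_le_coe_iff.2
    push_cast
    nlinarith [le_refl (0:ℝ)]

lemma key_lemma {n : ℕ} (A : Matrix (Fin n) (Fin n) EReal) (M : ℝ)
    (h : ∀ i j, A i j ≤ (M : EReal)) (i j : Fin n) :
    ∃ K : ℕ,
      (mexp A i j =
        ⨆ k : Fin (K + 1), (((-(tfact k.val) : ℝ) : EReal) + mpPow A k.val i j)) ∧
      (∃ k ≤ K, mexp A i j = ((-(tfact k) : ℝ) : EReal) + mpPow A k i j) ∧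
      mexp A i j ≠ ⊤ := by
  set t : ℕ → EReal := fun k => (((-(tfact k) : ℝ) : EReal) + mpPow A k i j) with ht
  have hmexp : mexp A i j = ⨆ k : ℕ, t k := rfl
  have ht_le : ∀ k, t k ≤ (((k : ℝ) * M - tfact k : ℝ) : EReal) := by
    intro k
    have := add_le_add (le_refl (((-(tfact k) : ℝ) : EReal))) (mpPow_le_bound A M h k i j)
    refine le_trans this ?_
    rw [← EReal.coe_add]
    apply EReal.coe_le_coe_iff.2
    ring_nf
    exact le_refl _
  have ht_ne_top : ∀ k, t k ≠ ⊤ := by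
    intro k
    exact ne_top_of_le_ne_top (EReal.coe_ne_top _) (ht_le k)
  by_cases hb : ∀ k, t k = ⊥
  · refine ⟨0, ?_, ⟨0, le_refl 0, ?_⟩, ?_⟩
    · rw [hmexp, iSup_eq_bot.2 hb]
      exact (iSup_eq_bot.2 (fun k : Fin 1 => hb k.val)).symm
    · rw [hmexp, iSup_eq_bot.2 hb, (hb 0).symm]
    · rw [hmexp, iSup_eq_bot.2 hb]; exact bot_ne_top
  · push_neg at hb
    obtain ⟨k0, hk0⟩ := hb
    set r : ℝ := (t k0).toReal with hr
    have htk0 : t k0 = (r : EReal) := (EReal.coe_toReal (ht_ne_top k0) hk0).symm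
    set K : ℕ := k0 + ⌈2 * M⌉₊ + ⌈2 * |r|⌉₊ with hK
    have hk0K : k0 ≤ K := by omega
    have hlarge : ∀ k, K < k → t k ≤ t k0 := by
      intro k hk
      refine le_trans (ht_le k) ?_
      rw [htk0]
      apply EReal.coe_le_coe_iff.2
      have h1 : 2 * M ≤ (k : ℝ) := by
        have := Nat.le_ceil (2 * M)
        have h2 : (⌈2 * M⌉₊ : ℝ) ≤ (k : ℝ) := by
          exact_mod_cast Nat.le_of_lt (by omega)
        linarith
      have h2 : 2 * |r| ≤ (k : ℝ) := by
        have := Nat.le_ceil (2 * |r|)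
        have h2 : (⌈2 * |r|⌉₊ : ℝ) ≤ (k : ℝ) := by
          exact_mod_cast Nat.le_of_lt (by omega)
        linarith
      have h3 : -|r| ≤ r := neg_abs_le r
      have h4 : (0 : ℝ) ≤ (k : ℝ) := Nat.cast_nonneg k
      have h5 : (0 : ℝ) ≤ (k : ℝ) * ((k : ℝ) / 2 - M) := by
        apply mul_nonneg h4
        linarith
      simp only [tfact]
      nlinarith
    refine ⟨K, ?_, ?_, ?_⟩
    · rw [hmexp]
      apply le_antisymm
      · apply iSup_le
        intro k
        by_cases hkK : k ≤ K
        · exact le_iSup_of_le (⟨k, by omega⟩ : Fin (K + 1)) (le_refl _)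
        · exact le_iSup_of_le (⟨k0, by omega⟩ : Fin (K + 1))
            (hlarge k (by omega))
      · exact iSup_le fun k => le_iSup t k.val
    · obtain ⟨m, hm⟩ := Finite.exists_max (fun k : Fin (K + 1) => t k.val)
      refine ⟨m.val, by omega, ?_⟩
      rw [hmexp]
      apply le_antisymm
      · apply iSup_le
        intro k
        by_cases hkK : k ≤ K
        · exact hm ⟨k, by omega⟩
        · exact le_trans (hlarge k (by omega)) (hm ⟨k0, by omega⟩)
      · exact le_iSup t m.val
    · rw [hmexp]
      intro htop
      obtain ⟨m, hm⟩ := Finite.exists_max (fun k : Fin (K + 1) => t k.val)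
      have : (⨆ k : ℕ, t k) ≤ t m.val := by
        apply iSup_le
        intro k
        by_cases hkK : k ≤ K
        · exact hm ⟨k, by omega⟩
        · exact le_trans (hlarge k (by omega)) (hm ⟨k0, by omega⟩)
      rw [htop] at this
      exact ht_ne_top m.val (top_le_iff.1 this)

theorem stmt_5 {n : ℕ} (A : Matrix (Fin n) (Fin n) EReal)
    (hA : ∀ i j, A i j ≠ ⊤) :
    ∃ K : ℕ, ∀ i j,
      (mexp A i j =
        ⨆ k : Fin (K + 1), (((-(tfact k.val) : ℝ) : EReal) + mpPow A k.val i j)) ∧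
      (∃ k ≤ K, mexp A i j = ((-(tfact k) : ℝ) : EReal) + mpPow A k i j) ∧
      mexp A i j ≠ ⊤ := by
  set M : ℝ := ⨆ p : Fin n × Fin n, (A p.1 p.2).toReal with hM
  have hAle : ∀ i j, A i j ≤ (M : EReal) := by
    intro i j
    refine le_trans (EReal.le_coe_toReal (hA i j)) ?_
    apply EReal.coe_le_coe_iff.2
    rw [hM]
    exact le_ciSup (Set.Finite.bddAbove (Set.finite_range
      (fun p : Fin n × Fin n => (A p.1 p.2).toReal))) (⟨i, j⟩ : Fin n × Fin n)
  have hkey : ∀ p : Fin n × Fin n, ∃ K : ℕ,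
      (mexp A p.1 p.2 =
        ⨆ k : Fin (K + 1), (((-(tfact k.val) : ℝ) : EReal) + mpPow A k.val p.1 p.2)) ∧
      (∃ k ≤ K, mexp A p.1 p.2 = ((-(tfact k) : ℝ) : EReal) + mpPow A k p.1 p.2) ∧
      mexp A p.1 p.2 ≠ ⊤ := fun p => key_lemma A M hAle p.1 p.2
  choose f hf using hkey
  refine ⟨Finset.univ.sup f, fun i j => ?_⟩
  have hfK : f (i, j) ≤ Finset.univ.sup f := Finset.le_sup (Finset.mem_univ _)
  obtain ⟨h1, h2, h3⟩ := hf (i, j)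
  refine ⟨?_, ?_, h3⟩
  · apply le_antisymm
    · rw [h1]
      apply iSup_le
      intro k
      exact le_iSup_of_le (⟨k.val, by omega⟩ : Fin (Finset.univ.sup f + 1)) (le_refl _)
    · apply iSup_le
      intro k
      exact le_iSup (fun k : ℕ => (((-(tfact k) : ℝ) : EReal) + mpPow A k i j)) k.val
  · obtain ⟨k, hk, he⟩ := h2
    exact ⟨k, le_trans hk hfK, he⟩

end
end

section
/- Let A ∈ M_n(𝕋), λ ∈ ℝ, and let v ∈ 𝕋^n with v ≠ (ε,…,ε) satisfy A ⊗ v = λ ⊗ v. Then e^(A) ⊗ v = E(λ) ⊗ v; that is, every eigenvector of A for eigenvalue λ is an eigenvector of e^(A) for eigenvalue E(λ). -/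
noncomputable section

section Aux

open EReal

lemma er_iSup_add {ι : Sort*} [Nonempty ι] (f : ι → EReal) (x : EReal) (hx : x ≠ ⊤) :
    (⨆ i, f i) + x = ⨆ i, (f i + x) := by
  induction x with
  | bot => simp
  | coe r =>
      apply le_antisymm
      · rw [← EReal.le_sub_iff_add_le (Or.inl (EReal.coe_ne_bot r))
            (Or.inl (EReal.coe_ne_top r))]
        exact iSup_le fun i =>
          (EReal.le_sub_iff_add_le (Or.inl (EReal.coe_ne_bot r))
            (Or.inl (EReal.coe_ne_top r))).2 (le_iSup (fun i => f i + (r : EReal)) i)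
      · exact iSup_le fun i => add_le_add_left (le_iSup f i) _
  | top => exact absurd rfl hx

lemma er_add_iSup {ι : Sort*} [Nonempty ι] (f : ι → EReal) (x : EReal) (hx : x ≠ ⊤) :
    x + (⨆ i, f i) = ⨆ i, (x + f i) := by
  rw [add_comm, er_iSup_add f x hx]
  simp_rw [add_comm]

lemma fin_iSup_ne_top {m : ℕ} (f : Fin m → EReal) (h : ∀ i, f i ≠ ⊤) :
    (⨆ i, f i) ≠ ⊤ := by
  cases m with
  | zero => simp
  | succ m =>
      obtain ⟨i, hi⟩ := Finite.exists_max f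
      rw [le_antisymm (iSup_le hi) (le_iSup f i)]
      exact h i

lemma coe_ciSup_eq {f : ℕ → ℝ} (h : BddAbove (Set.range f)) :
    ((⨆ k, f k : ℝ) : EReal) = ⨆ k, ((f k : ℝ) : EReal) := by
  obtain ⟨b, hb⟩ := h
  have hub : ∀ k, f k ≤ b := fun k => hb ⟨k, rfl⟩
  have hS_le : (⨆ k, ((f k : ℝ) : EReal)) ≤ (b : EReal) :=
    iSup_le fun k => EReal.coe_le_coe_iff.2 (hub k)
  have hS_bot : ((f 0 : ℝ) : EReal) ≤ ⨆ k, ((f k : ℝ) : EReal) := le_iSup (fun k => ((f k : ℝ) : EReal)) 0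
  have hnt : (⨆ k, ((f k : ℝ) : EReal)) ≠ ⊤ :=
    fun ht => (EReal.coe_ne_top b) (top_le_iff.1 (ht ▸ hS_le))
  have hnb : (⨆ k, ((f k : ℝ) : EReal)) ≠ ⊥ :=
    fun hbot => (EReal.coe_ne_bot (f 0)) (le_bot_iff.1 (hbot ▸ hS_bot))
  lift (⨆ k, ((f k : ℝ) : EReal)) to ℝ using ⟨hnt, hnb⟩ with s hs
  refine congrArg _ ?_
  apply le_antisymm
  · exact ciSup_le fun k => EReal.coe_le_coe_iff.1 (hs ▸ le_iSup (fun k => ((f k : ℝ) : EReal)) k)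
  · refine EReal.coe_le_coe_iff.1 ?_
    rw [hs]
    exact iSup_le fun k => EReal.coe_le_coe_iff.2 (le_ciSup ⟨b, hb⟩ k)

end Aux


lemma mpPow_ne_top {n : ℕ} (A : Matrix (Fin n) (Fin n) EReal)
    (hA : ∀ i j, A i j ≠ ⊤) : ∀ k i j, mpPow A k i j ≠ ⊤ := by
  intro k
  induction k with
  | zero =>
      intro i j
      show mpId i j ≠ ⊤
      unfold mpId
      split <;> simp
  | succ k ih =>
      intro i j
      show (⨆ l, mpPow A k i l + A l j) ≠ ⊤
      exact fin_iSup_ne_top _ fun l => (EReal.add_lt_top (ih i l) (hA l j)).ne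

lemma pow_eig {n : ℕ} (A : Matrix (Fin n) (Fin n) EReal)
    (hA : ∀ i j, A i j ≠ ⊤) (lam : ℝ) (v : Fin n → EReal)
    (hv_top : ∀ i, v i ≠ ⊤)
    (heig : mpMulVec A v = fun i => (lam : EReal) + v i) :
    ∀ k, mpMulVec (mpPow A k) v = fun i => (((k : ℝ) * lam : ℝ) : EReal) + v i := by
  intro k
  induction k with
  | zero =>
      funext i
      show (⨆ j, mpId i j + v j) = (((0 : ℕ) : ℝ) * lam : ℝ) + v i
      have h0 : ((((0 : ℕ) : ℝ) * lam : ℝ) : EReal) = 0 := by norm_num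
      rw [h0, zero_add]
      apply le_antisymm
      · refine iSup_le fun j => ?_
        by_cases h : i = j
        · subst h; simp [mpId]
        · simp [mpId, h]
      · have := le_iSup (fun j => mpId i j + v j) i
        simpa [mpId] using this
  | succ k ih =>
      funext i
      have hne : Nonempty (Fin n) := ⟨i⟩
      calc mpMulVec (mpPow A (k + 1)) v i
          = ⨆ j, (⨆ l, mpPow A k i l + A l j) + v j := rfl
        _ = ⨆ j, ⨆ l, (mpPow A k i l + A l j + v j) :=
            iSup_congr fun j => er_iSup_add _ _ (hv_top j)
        _ = ⨆ l, ⨆ j, (mpPow A k i l + (A l j + v j)) := by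
            rw [iSup_comm]; simp_rw [add_assoc]
        _ = ⨆ l, (mpPow A k i l + ⨆ j, (A l j + v j)) :=
            iSup_congr fun l => (er_add_iSup _ _ (mpPow_ne_top A hA k i l)).symm
        _ = ⨆ l, (mpPow A k i l + ((lam : EReal) + v l)) := by
            refine iSup_congr fun l => ?_
            have h := congrFun heig l
            simp only [mpMulVec] at h
            rw [h]
        _ = ⨆ l, ((lam : EReal) + (mpPow A k i l + v l)) :=
            iSup_congr fun l => add_left_comm _ _ _
        _ = (lam : EReal) + ⨆ l, (mpPow A k i l + v l) :=
            (er_add_iSup _ _ (EReal.coe_ne_top lam)).symm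
        _ = (lam : EReal) + ((((k : ℝ) * lam : ℝ) : EReal) + v i) := by
            have h := congrFun ih i
            simp only [mpMulVec] at h
            rw [h]
        _ = ((((k + 1 : ℕ) : ℝ) * lam : ℝ) : EReal) + v i := by
            rw [← add_assoc, ← EReal.coe_add,
              show lam + (k : ℝ) * lam = ((k + 1 : ℕ) : ℝ) * lam from by push_cast; ring]

theorem stmt_7 {n : ℕ} (A : Matrix (Fin n) (Fin n) EReal)
    (hA : ∀ i j, A i j ≠ ⊤) (lam : ℝ) (v : Fin n → EReal)
    (hv_top : ∀ i, v i ≠ ⊤) (hv : v ≠ fun _ => ⊥)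
    (heig : mpMulVec A v = fun i => (lam : EReal) + v i) :
    mpMulVec (mexp A) v = fun i => ((Escalar lam : ℝ) : EReal) + v i := by
  funext i
  have hne : Nonempty (Fin n) := ⟨i⟩
  have hbdd : BddAbove (Set.range fun k : ℕ => (k : ℝ) * lam - tfact k) := by
    refine ⟨lam ^ 2 / 2, ?_⟩
    rintro x ⟨k, rfl⟩
    have hk : (0 : ℝ) ≤ (k : ℝ) := Nat.cast_nonneg k
    unfold tfact
    nlinarith [sq_nonneg ((k : ℝ) - lam)]
  calc mpMulVec (mexp A) v i
      = ⨆ j, (⨆ k : ℕ, (((-(tfact k) : ℝ) : EReal) + mpPow A k i j)) + v j := rfl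
    _ = ⨆ j, ⨆ k : ℕ, ((((-(tfact k) : ℝ) : EReal) + mpPow A k i j) + v j) :=
        iSup_congr fun j => er_iSup_add _ _ (hv_top j)
    _ = ⨆ k : ℕ, ⨆ j, (((-(tfact k) : ℝ) : EReal) + (mpPow A k i j + v j)) := by
        rw [iSup_comm]; simp_rw [add_assoc]
    _ = ⨆ k : ℕ, (((-(tfact k) : ℝ) : EReal) + ⨆ j, (mpPow A k i j + v j)) :=
        iSup_congr fun k => (er_add_iSup _ _ (EReal.coe_ne_top _)).symm
    _ = ⨆ k : ℕ, (((-(tfact k) : ℝ) : EReal) + ((((k : ℝ) * lam : ℝ) : EReal) + v i)) := by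
        refine iSup_congr fun k => ?_
        have h := congrFun (pow_eig A hA lam v hv_top heig k) i
        simp only [mpMulVec] at h
        rw [h]
    _ = ⨆ k : ℕ, ((((k : ℝ) * lam - tfact k : ℝ) : EReal) + v i) := by
        refine iSup_congr fun k => ?_
        rw [← add_assoc, ← EReal.coe_add,
          show -tfact k + (k : ℝ) * lam = (k : ℝ) * lam - tfact k from by ring]
    _ = (⨆ k : ℕ, (((k : ℝ) * lam - tfact k : ℝ) : EReal)) + v i :=
        (er_iSup_add _ _ (hv_top i)).symm
    _ = ((Escalar lam : ℝ) : EReal) + v i := by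
        rw [Escalar, coe_ciSup_eq hbdd]


end
end

section
/- Let A ∈ M_n(𝕋) have maximum cycle mean λ = λ(A) > 0, set B = (−λ) ⊗ A, and let Δ(B) = ⨁_{k ≥ 0} B^(k) be the Kleene star (the entrywise supremum exists since λ(B) = 0). Let (a_k)_{k ≥ 0} be a sequence in 𝕋 with s := sup_{k ≥ 0} (a_k + k·λ) < ∞. Then, entrywise, ⨁_{k ≥ 0} a_k ⊗ A^(k) ≤ s ⊗ Δ(B). In particular, e^(A) ≤ E(λ) ⊗ Δ((−λ) ⊗ A). -/
noncomputable section

lemma real_add_cancel' (r : ℝ) (x : EReal) : ((-r : ℝ) : EReal) + ((r : EReal) + x) = x := by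
  induction x using EReal.rec with
  | bot => simp
  | coe y => rw [← EReal.coe_add, ← EReal.coe_add]; norm_num
  | top =>
    rw [EReal.coe_add_top, EReal.coe_add_top]

lemma real_add_iSup' {ι : Sort*} (r : ℝ) (f : ι → EReal) :
    (r : EReal) + ⨆ k, f k = ⨆ k, ((r : EReal) + f k) := by
  apply le_antisymm
  · have h : (⨆ k, f k) ≤ ((-r : ℝ) : EReal) + ⨆ k, ((r : EReal) + f k) := by
      refine iSup_le fun k => ?_
      rw [← real_add_cancel' r (f k)]
      exact add_le_add_right (le_iSup (fun k => (r : EReal) + f k) k) _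
    calc (r : EReal) + ⨆ k, f k
        ≤ (r : EReal) + (((-r : ℝ) : EReal) + ⨆ k, ((r : EReal) + f k)) :=
          add_le_add_right h _
      _ = ⨆ k, ((r : EReal) + f k) := by
          rw [← add_assoc, ← EReal.coe_add]
          norm_num
  · exact iSup_le fun k => add_le_add_right (le_iSup f k) _

lemma mpPow_smulE' {ι : Type*} [DecidableEq ι] (A : Matrix ι ι EReal) (c : ℝ) (k : ℕ) :
    ∀ i j, mpPow (smulE c A) k i j = (((k : ℝ) * c : ℝ) : EReal) + mpPow A k i j := by
  induction k with
  | zero => intro i j; simp [mpPow]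
  | succ k ih =>
    intro i j
    show mpMul (mpPow (smulE c A) k) (smulE c A) i j = _
    have step : ∀ l, mpPow (smulE c A) k i l + smulE c A l j =
        ((((k : ℝ) + 1) * c : ℝ) : EReal) + (mpPow A k i l + A l j) := by
      intro l
      rw [ih, smulE, add_add_add_comm, ← EReal.coe_add]
      congr 2
      ring
    unfold mpMul
    simp only [step]
    rw [← real_add_iSup']
    rw [Nat.cast_add, Nat.cast_one]
    rfl

lemma key' {n : ℕ} (A : Matrix (Fin n) (Fin n) EReal) (lam : ℝ)
    (a : ℕ → EReal) (ha : ∀ k, a k ≠ ⊤) (s : ℝ)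
    (hs : ∀ k, a k + (((k : ℝ) * lam : ℝ) : EReal) ≤ (s : EReal)) (i j : Fin n) :
    (⨆ k : ℕ, (a k + mpPow A k i j)) ≤
      (s : EReal) + (⨆ k : ℕ, mpPow (smulE (-lam) A) k i j) := by
  refine iSup_le fun k => ?_
  have hle : a k + mpPow A k i j ≤ (s : EReal) + mpPow (smulE (-lam) A) k i j := by
    rw [mpPow_smulE']
    by_cases hb : a k = ⊥
    · rw [hb, EReal.bot_add]
      exact bot_le
    · obtain ⟨r, hr⟩ : ∃ r : ℝ, a k = (r : EReal) :=
        ⟨(a k).toReal, (EReal.coe_toReal (ha k) hb).symm⟩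
      have hrs : (r + (k : ℝ) * lam : ℝ) ≤ s := by
        have h1 := hs k
        rw [hr, ← EReal.coe_add] at h1
        exact_mod_cast h1
      rw [hr]
      have eqn : (r : EReal) + mpPow A k i j =
          ((r + (k : ℝ) * lam : ℝ) : EReal) +
            ((((k : ℝ) * (-lam) : ℝ) : EReal) + mpPow A k i j) := by
        rw [← add_assoc, ← EReal.coe_add]
        congr 1
        norm_cast
        ring
      rw [eqn]
      exact add_le_add (EReal.coe_le_coe_iff.2 hrs) le_rfl
  calc a k + mpPow A k i j ≤ (s : EReal) + mpPow (smulE (-lam) A) k i j := hle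
    _ ≤ (s : EReal) + (⨆ k : ℕ, mpPow (smulE (-lam) A) k i j) :=
        add_le_add_right (le_iSup (fun k => mpPow (smulE (-lam) A) k i j) k) _

theorem stmt_8 {n : ℕ} (A : Matrix (Fin n) (Fin n) EReal)
    (hA : ∀ i j, A i j ≠ ⊤)
    (lam : ℝ) (hmax : isMaxCycleMean A lam) (hpos : 0 < lam)
    (a : ℕ → EReal) (ha : ∀ k, a k ≠ ⊤) (s : ℝ)
    (hs : (⨆ k : ℕ, (a k + (((k : ℝ) * lam : ℝ) : EReal))) = (s : EReal)) :
    (∀ i j, (⨆ k : ℕ, (a k + mpPow A k i j)) ≤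
        (s : EReal) + (⨆ k : ℕ, mpPow (smulE (-lam) A) k i j)) ∧
    (∀ i j, mexp A i j ≤
        ((Escalar lam : ℝ) : EReal) + (⨆ k : ℕ, mpPow (smulE (-lam) A) k i j)) := by
  constructor
  · intro i j
    refine key' A lam a ha s (fun k => ?_) i j
    rw [← hs]
    exact le_iSup (fun k => a k + (((k : ℝ) * lam : ℝ) : EReal)) k
  · intro i j
    have hb : BddAbove (Set.range fun k : ℕ => (k : ℝ) * lam - tfact k) := by
      refine ⟨lam * lam, ?_⟩
      rintro x ⟨k, rfl⟩
      have hk : (0 : ℝ) ≤ (k : ℝ) := Nat.cast_nonneg k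
      simp only [tfact]
      nlinarith [sq_nonneg ((k : ℝ) - lam)]
    refine key' A lam (fun k => ((-(tfact k) : ℝ) : EReal)) (fun k => by simp) (Escalar lam)
      (fun k => ?_) i j
    rw [← EReal.coe_add, EReal.coe_le_coe_iff]
    have := le_ciSup hb k
    simpa [Escalar] using by linarith [le_ciSup hb k]

end
end

section
/- For every real a > 0, the scalar tropical exponential satisfies E(1 + E(a)) = E(a) + E(E(a)); tropically, e^(1 ⊗ e^(a)) = e^(a) ⊗ e^(e^(a)). -/
noncomputable section

lemma Escalar_bdd (a : ℝ) : BddAbove (Set.range fun k : ℕ => (k : ℝ) * a - tfact k) := by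
  refine ⟨a ^ 2 / 2, ?_⟩
  rintro x ⟨k, rfl⟩
  have hk : (0 : ℝ) ≤ k := Nat.cast_nonneg k
  have h1 : ((k : ℝ) - a) ^ 2 ≥ 0 := sq_nonneg _
  simp only [tfact]
  nlinarith [sq_nonneg ((k : ℝ) - a)]

lemma Escalar_nonneg (a : ℝ) : 0 ≤ Escalar a := by
  have := le_ciSup (Escalar_bdd a) 0
  simpa [tfact, Escalar] using this

lemma le_Escalar (a : ℝ) (k : ℕ) : (k : ℝ) * a - tfact k ≤ Escalar a :=
  le_ciSup (Escalar_bdd a) k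

lemma key (j : ℕ) (b : ℝ) :
    ((j : ℝ) + 1) * (1 + b) - tfact (j + 1) = b + ((j : ℝ) * b - tfact j) := by
  simp only [tfact, Nat.cast_add, Nat.cast_one]
  ring

theorem stmt_9 (a : ℝ) (ha : 0 < a) :
    Escalar (1 + Escalar a) = Escalar a + Escalar (Escalar a) := by
  set b := Escalar a with hb
  have hb0 : 0 ≤ b := Escalar_nonneg a
  apply le_antisymm
  · apply ciSup_le
    intro k
    cases k with
    | zero =>
        simp only [Nat.cast_zero, zero_mul, tfact, mul_zero, zero_div, sub_zero,
          Nat.cast_zero, zero_add, zero_mul]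
        have : (0:ℝ) * (1+b) - tfact 0 = 0 := by simp [tfact]
        have := Escalar_nonneg b
        linarith
    | succ j =>
        have h := key j b
        have : (↑(j+1) : ℝ) * (1 + b) - tfact (j + 1) = b + ((j : ℝ) * b - tfact j) := by
          push_cast
          push_cast at h
          linarith
        rw [this]
        exact add_le_add_right (le_Escalar b j) b
  · have : Escalar b ≤ Escalar (1 + b) - b := by
      apply ciSup_le
      intro j
      have h := key j b
      have h2 := le_Escalar (1 + b) (j + 1)
      push_cast at h h2 ⊢
      linarith
    linarith
end
end

section
/- Let A ∈ M_n(𝕋) have maximum cycle mean λ(A) > 1. Then e^(1 ⊗ e^(A)) = e^(A) ⊗ e^(e^(A)), where 1 ⊗ e^(A) denotes the matrix obtained from e^(A) by adding 1 to every entry. -/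
noncomputable section

section AuxLemmas

open EReal

lemma ereal_real_add_cancel (r : ℝ) (x : EReal) :
    ((-r : ℝ) : EReal) + (((r : ℝ) : EReal) + x) = x := by
  induction x using EReal.rec with
  | bot => simp [add_bot]
  | top =>
    rw [EReal.add_top_of_ne_bot (by simp), EReal.add_top_of_ne_bot (by simp)]
  | coe y =>
    norm_cast
    ring

lemma ereal_add_iSup {ι : Sort*} (c : EReal) (f : ι → EReal) :
    c + ⨆ i, f i = ⨆ i, c + f i := by
  induction c using EReal.rec with
  | bot =>
    have hb : ∀ i : ι, (⊥ : EReal) + f i = ⊥ := fun i => EReal.bot_add _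
    rw [EReal.bot_add]
    simp only [hb]
    exact (le_antisymm (iSup_le fun _ => le_rfl) bot_le).symm
  | top =>
    by_cases h : ∀ i, f i = ⊥
    · have hs : (⨆ i, f i) = ⊥ := le_antisymm (iSup_le fun i => (h i).le) bot_le
      have hb : ∀ i : ι, (⊤ : EReal) + f i = ⊥ := fun i => by rw [h i, EReal.add_bot]
      rw [hs, EReal.add_bot]
      simp only [hb]
      exact (le_antisymm (iSup_le fun _ => le_rfl) bot_le).symm
    · push_neg at h
      obtain ⟨i, hi⟩ := h
      have hs : (⨆ j, f j) ≠ ⊥ := fun hb => hi (le_antisymm (hb ▸ le_iSup f i) bot_le)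
      rw [EReal.top_add_of_ne_bot hs]
      refine le_antisymm ?_ le_top
      calc (⊤ : EReal) = ⊤ + f i := (EReal.top_add_of_ne_bot hi).symm
        _ ≤ ⨆ j, ⊤ + f j := le_iSup (fun j => ⊤ + f j) i
  | coe r =>
    refine le_antisymm ?_ (iSup_le fun i => add_le_add_right (le_iSup f i) _)
    have h1 : (⨆ i, f i) ≤ ((-r : ℝ) : EReal) + ⨆ i, ((r : ℝ) : EReal) + f i := by
      refine iSup_le fun i => ?_
      calc f i = ((-r : ℝ) : EReal) + (((r : ℝ) : EReal) + f i) :=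
            (ereal_real_add_cancel r (f i)).symm
        _ ≤ _ := add_le_add_right (le_iSup (fun j => ((r : ℝ) : EReal) + f j) i) _
    calc ((r : ℝ) : EReal) + ⨆ i, f i
        ≤ ((r : ℝ) : EReal) + (((-r : ℝ) : EReal) + ⨆ i, ((r : ℝ) : EReal) + f i) :=
          add_le_add_right h1 _
      _ = ⨆ i, ((r : ℝ) : EReal) + f i := by
          rw [show ((r : ℝ) : EReal) = ((-(-r) : ℝ) : EReal) by norm_num]
          exact ereal_real_add_cancel (-r) _

lemma ereal_iSup_add {ι : Sort*} (c : EReal) (f : ι → EReal) :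
    (⨆ i, f i) + c = ⨆ i, f i + c := by
  rw [add_comm, ereal_add_iSup]
  simp [add_comm]

lemma mpMul_assoc {ι κ μ ν : Type*} (A : Matrix ι κ EReal) (B : Matrix κ μ EReal)
    (C : Matrix μ ν EReal) : mpMul (mpMul A B) C = mpMul A (mpMul B C) := by
  funext i j
  show (⨆ l, (⨆ k, A i k + B k l) + C l j) = ⨆ k, A i k + ⨆ l, B k l + C l j
  calc (⨆ l, (⨆ k, A i k + B k l) + C l j)
      = ⨆ l, ⨆ k, (A i k + B k l) + C l j := by
        refine iSup_congr fun l => ?_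
        rw [ereal_iSup_add]
    _ = ⨆ k, ⨆ l, A i k + (B k l + C l j) := by
        rw [iSup_comm]
        exact iSup_congr fun k => iSup_congr fun l => add_assoc _ _ _
    _ = ⨆ k, A i k + ⨆ l, B k l + C l j := by
        refine iSup_congr fun k => ?_
        rw [ereal_add_iSup]

lemma mpMul_id_left {ι : Type*} [DecidableEq ι] (B : Matrix ι ι EReal) :
    mpMul mpId B = B := by
  funext i j
  show (⨆ l, mpId i l + B l j) = B i j
  refine le_antisymm (iSup_le fun l => ?_) ?_
  · by_cases h : i = l
    · subst h; simp [mpId]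
    · simp [mpId, h, EReal.bot_add]
  · calc B i j = mpId i i + B i j := by simp [mpId]
      _ ≤ _ := le_iSup (fun l => mpId i l + B l j) i

lemma mpPow_one {ι : Type*} [DecidableEq ι] (B : Matrix ι ι EReal) :
    mpPow B 1 = B := by
  show mpMul mpId B = B
  exact mpMul_id_left B

lemma mpPow_succ_left {ι : Type*} [DecidableEq ι] (B : Matrix ι ι EReal) (k : ℕ) :
    mpPow B (k + 1) = mpMul B (mpPow B k) := by
  induction k with
  | zero =>
    show mpMul mpId B = mpMul B mpId
    rw [mpMul_id_left]
    funext i j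
    show B i j = ⨆ l, B i l + mpId l j
    refine le_antisymm ?_ (iSup_le fun l => ?_)
    · calc B i j = B i j + mpId j j := by simp [mpId]
        _ ≤ _ := le_iSup (fun l => B i l + mpId l j) j
    · by_cases h : l = j
      · subst h; simp [mpId]
      · simp [mpId, h, EReal.add_bot]
  | succ m ih =>
    calc mpMul (mpPow B (m + 1)) B = mpMul (mpMul B (mpPow B m)) B := by rw [ih]
      _ = mpMul B (mpMul (mpPow B m) B) := mpMul_assoc _ _ _
      _ = mpMul B (mpPow B (m + 1)) := rfl

lemma smulE_pow {ι : Type*} [DecidableEq ι] (B : Matrix ι ι EReal) (k : ℕ) :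
    mpPow (smulE 1 B) k = fun i j => (((k : ℝ) : EReal) + mpPow B k i j) := by
  induction k with
  | zero =>
    funext i j
    show mpId i j = (((0 : ℕ) : ℝ) : EReal) + mpId i j
    simp
  | succ m ih =>
    funext i j
    show (⨆ l, mpPow (smulE 1 B) m i l + smulE 1 B l j) = _
    rw [ih]
    have : ∀ l, (((m : ℝ) : EReal) + mpPow B m i l) + smulE 1 B l j
        = (((m + 1 : ℕ) : ℝ) : EReal) + (mpPow B m i l + B l j) := by
      intro l
      show (((m : ℝ) : EReal) + mpPow B m i l) + (((1 : ℝ) : EReal) + B l j) = _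
      have hc : (((m + 1 : ℕ) : ℝ) : EReal) = ((m : ℝ) : EReal) + ((1 : ℝ) : EReal) := by
        norm_cast
      rw [hc]
      abel
    simp only [this]
    rw [← ereal_add_iSup]
    rfl

lemma mexp_diag_nonneg {ι : Type*} [DecidableEq ι] (B : Matrix ι ι EReal) (i : ι) :
    (0 : EReal) ≤ mexp B i i := by
  have h0 : (((-(tfact 0) : ℝ) : EReal) + mpPow B 0 i i) = 0 := by
    simp [tfact, mpPow, mpId]
  calc (0 : EReal) = _ := h0.symm
    _ ≤ _ := le_iSup (fun k => ((-(tfact k) : ℝ) : EReal) + mpPow B k i i) 0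

end AuxLemmas

theorem stmt_10 {n : ℕ} (A : Matrix (Fin n) (Fin n) EReal)
    (hA : ∀ i j, A i j ≠ ⊤)
    (lam : ℝ) (hmax : isMaxCycleMean A lam) (hlam : 1 < lam) :
    mexp (smulE 1 (mexp A)) = mpMul (mexp A) (mexp (mexp A)) := by
  set B := mexp A with hB
  funext i j
  set g : ℕ → EReal := fun k => ((((k : ℝ) - tfact k : ℝ)) : EReal) + mpPow B k i j with hg
  have hLHS : mexp (smulE 1 B) i j = ⨆ k, g k := by
    show (⨆ k, (((-(tfact k) : ℝ) : EReal) + mpPow (smulE 1 B) k i j)) = ⨆ k, g k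
    refine iSup_congr fun k => ?_
    rw [smulE_pow]
    show ((-(tfact k) : ℝ) : EReal) + (((k : ℝ) : EReal) + mpPow B k i j) = _
    rw [← add_assoc, hg]
    congr 1
    norm_cast
    ring
  have hRHS : mpMul B (mexp B) i j = ⨆ k, g (k + 1) := by
    show (⨆ l, B i l + ⨆ k, (((-(tfact k) : ℝ) : EReal) + mpPow B k l j)) = _
    calc (⨆ l, B i l + ⨆ k, (((-(tfact k) : ℝ) : EReal) + mpPow B k l j))
        = ⨆ l, ⨆ k, B i l + ((((-(tfact k) : ℝ) : EReal)) + mpPow B k l j) := by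
          exact iSup_congr fun l => ereal_add_iSup _ _
      _ = ⨆ k, ⨆ l, (((-(tfact k) : ℝ) : EReal)) + (B i l + mpPow B k l j) := by
          rw [iSup_comm]
          refine iSup_congr fun k => iSup_congr fun l => ?_
          abel
      _ = ⨆ k, (((-(tfact k) : ℝ) : EReal)) + mpMul B (mpPow B k) i j := by
          exact iSup_congr fun k => (ereal_add_iSup _ _).symm
      _ = ⨆ k, g (k + 1) := by
          refine iSup_congr fun k => ?_
          rw [← mpPow_succ_left, hg]
          congr 1
          push_cast
          simp only [tfact]
          norm_cast
          push_cast
          ring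
  rw [hLHS, hRHS]
  refine le_antisymm (iSup_le fun k => ?_) (iSup_le fun k => le_iSup g (k + 1))
  match k with
  | 0 =>
    by_cases hij : i = j
    · subst hij
      have h0 : g 0 = (0 : EReal) := by
        simp [hg, tfact, mpPow, mpId]
      have h1 : (0 : EReal) ≤ g 1 := by
        have : g 1 = B i i := by
          show (((((1 : ℕ) : ℝ) - tfact 1 : ℝ)) : EReal) + mpPow B 1 i i = B i i
          have h10 : (((1 : ℕ) : ℝ) - tfact 1 : ℝ) = 0 := by simp [tfact]
          rw [h10, mpPow_one]
          simp
        rw [this, hB]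
        exact mexp_diag_nonneg A i
      calc g 0 = (0 : EReal) := h0
        _ ≤ g 1 := h1
        _ ≤ _ := le_iSup (fun k => g (k + 1)) 0
    · have h0 : g 0 = ⊥ := by
        simp [hg, tfact, mpPow, mpId, hij, EReal.add_bot]
      rw [h0]; exact bot_le
  | m + 1 => exact le_iSup (fun k => g (k + 1)) m
end
end

section
/- Let A ∈ M_n(𝕋) be irreducible. Suppose that every strongly connected component of the critical digraph C(A) contains a vertex i with a_{ii} = λ(A). Then A is robust. -/
noncomputable section

namespace MP13
set_option linter.unusedSectionVars false
variable {n : ℕ}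
lemma finMax' {α : Type*} [Finite α] [Nonempty α] (f : α → EReal) :
    ∃ k, (⨆ j, f j) = f k := by
  obtain ⟨k, hk⟩ := Finite.exists_max f
  exact ⟨k, le_antisymm (iSup_le hk) (le_iSup f k)⟩

/-- weight of the walk `w 0 → ⋯ → w r`. -/
def Wt (B : Matrix (Fin n) (Fin n) EReal) (w : ℕ → Fin n) (r : ℕ) : EReal :=
  ∑ t ∈ Finset.range r, B (w t) (w (t+1))

variable [NeZero n] (B : Matrix (Fin n) (Fin n) EReal)

lemma Wt_le_pow (w : ℕ → Fin n) (r : ℕ) : Wt B w r ≤ mpPow B r (w 0) (w r) := by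
  induction r with
  | zero => simp [Wt, mpPow, mpId]
  | succ r ih =>
    have h1 : Wt B w (r+1) = Wt B w r + B (w r) (w (r+1)) := Finset.sum_range_succ _ _
    rw [h1]
    calc Wt B w r + B (w r) (w (r+1)) ≤ mpPow B r (w 0) (w r) + B (w r) (w (r+1)) :=
          add_le_add_left ih _
    _ ≤ ⨆ k, mpPow B r (w 0) k + B k (w (r+1)) :=
          le_iSup (fun k => mpPow B r (w 0) k + B k (w (r+1))) (w r)
    _ = mpPow B (r+1) (w 0) (w (r+1)) := rfl

lemma pow_walk (r : ℕ) (i j : Fin n) :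
    mpPow B r i j = ⊥ ∨ ∃ w : ℕ → Fin n, w 0 = i ∧ w r = j ∧ mpPow B r i j = Wt B w r := by
  induction r generalizing j with
  | zero =>
    by_cases h : i = j
    · subst h
      right
      exact ⟨fun _ => i, rfl, rfl, by simp [mpPow, mpId, Wt]⟩
    · left; simp [mpPow, mpId, h]
  | succ r ih =>
    obtain ⟨k, hk⟩ := finMax' (fun k => mpPow B r i k + B k j)
    have hent : mpPow B (r+1) i j = mpPow B r i k + B k j := hk
    rcases ih k with hb | ⟨w, hw0, hwr, hwv⟩
    · left; rw [hent, hb, EReal.bot_add]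
    · by_cases hB : B k j = ⊥
      · left; rw [hent, hB, EReal.add_bot]
      · right
        refine ⟨fun t => if t = r+1 then j else w t, by simp [hw0], by simp, ?_⟩
        have hsum : Wt B (fun t => if t = r+1 then j else w t) (r+1)
            = (∑ t ∈ Finset.range r, B (w t) (w (t+1))) + B (w r) j := by
          rw [Wt, Finset.sum_range_succ]
          congr 1
          · refine Finset.sum_congr rfl fun t ht => ?_
            have ht' := Finset.mem_range.1 ht
            have h1 : t ≠ r + 1 := by omega
            have h2 : t + 1 ≠ r + 1 := by omega
            simp [h1, h2, show t ≠ r by omega]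
          · have h1 : r ≠ r + 1 := by omega
            simp [h1]
        rw [hent, hwv, hsum, hwr]
        rfl

lemma pow_concat (a b : ℕ) (i j k : Fin n) :
    mpPow B a i j + mpPow B b j k ≤ mpPow B (a+b) i k := by
  induction b generalizing k with
  | zero =>
    by_cases h : j = k
    · subst h; simp [mpPow, mpId]
    · simp [mpPow, mpId, h]
  | succ b ih =>
    show mpPow B a i j + (⨆ m, mpPow B b j m + B m k) ≤ ⨆ m, mpPow B (a+b) i m + B m k
    obtain ⟨m, hm⟩ := finMax' (fun m => mpPow B b j m + B m k)
    rw [hm]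
    calc mpPow B a i j + (mpPow B b j m + B m k)
        = (mpPow B a i j + mpPow B b j m) + B m k := (add_assoc _ _ _).symm
    _ ≤ mpPow B (a+b) i m + B m k := add_le_add_left (ih m) _
    _ ≤ ⨆ m, mpPow B (a+b) i m + B m k := le_iSup (fun m => mpPow B (a+b) i m + B m k) m

lemma pow_ne_top (hB : ∀ i j, B i j ≠ ⊤) (r : ℕ) (i j : Fin n) : mpPow B r i j ≠ ⊤ := by
  induction r generalizing j with
  | zero =>
    by_cases h : i = j
    · subst h; simp [mpPow, mpId]
    · simp [mpPow, mpId, h]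
  | succ r ih =>
    obtain ⟨k, hk⟩ := finMax' (fun k => mpPow B r i k + B k j)
    show (⨆ k, mpPow B r i k + B k j) ≠ ⊤
    rw [hk]
    exact (EReal.add_lt_top (ih k) (hB k j)).ne



/-- Kleene-star-like finite max of powers `0 … n-1`. -/
def Q (B : Matrix (Fin n) (Fin n) EReal) (i j : Fin n) : EReal :=
  ⨆ k : Fin n, mpPow B (k : ℕ) i j

lemma splice (w : ℕ → Fin n) {s t r : ℕ} (hst : s < t) (htr : t ≤ r) (hw : w s = w t) :
    Wt B w r = Wt B (fun u => if u < s then w u else w (u + (t - s))) (r - (t - s))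
      + Wt B (fun q => w (s + q)) (t - s) := by
  set d := t - s with hd
  set r' := r - d with hr'
  set f : ℕ → EReal := fun u => B (w u) (w (u+1)) with hf
  have hsd : s + d = t := by omega
  have hrd : r' + d = r := by omega
  have hsr' : s ≤ r' := by omega
  have split1 : Wt B w r = (∑ u ∈ Finset.Ico 0 s, f u) + ((∑ u ∈ Finset.Ico s t, f u)
      + (∑ u ∈ Finset.Ico t r, f u)) := by
    have e1 : (∑ u ∈ Finset.Ico 0 t, f u) + (∑ u ∈ Finset.Ico t r, f u)
        = ∑ u ∈ Finset.Ico 0 r, f u := Finset.sum_Ico_consecutive f (by omega) htr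
    have e2 : (∑ u ∈ Finset.Ico 0 s, f u) + (∑ u ∈ Finset.Ico s t, f u)
        = ∑ u ∈ Finset.Ico 0 t, f u := Finset.sum_Ico_consecutive f (by omega) hst.le
    rw [Wt, Finset.range_eq_Ico, ← e1, ← e2, add_assoc]
  have mid : (∑ u ∈ Finset.Ico s t, f u) = Wt B (fun q => w (s + q)) d := by
    rw [Finset.sum_Ico_eq_sum_range]
    rfl
  have last : (∑ u ∈ Finset.Ico t r, f u) = ∑ q ∈ Finset.range (r - t), f (t + q) :=
    Finset.sum_Ico_eq_sum_range f t r
  set w' : ℕ → Fin n := fun u => if u < s then w u else w (u + d) with hw'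
  have wsplit : Wt B w' r' = (∑ u ∈ Finset.Ico 0 s, f u) + (∑ u ∈ Finset.Ico t r, f u) := by
    rw [Wt, Finset.range_eq_Ico, ← Finset.sum_Ico_consecutive _ (Nat.zero_le s) hsr']
    congr 1
    · refine Finset.sum_congr rfl fun u hu => ?_
      have hu' : u < s := (Finset.mem_Ico.1 hu).2
      have e1 : w' u = w u := by simp [hw', hu']
      have e2 : w' (u+1) = w (u+1) := by
        by_cases h : u + 1 < s
        · simp [hw', h]
        · have : u + 1 = s := by omega
          simp [hw', this, hsd, ← hw]
      rw [e1, e2]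
    · rw [Finset.sum_Ico_eq_sum_range, last]
      have hlen : r' - s = r - t := by omega
      rw [hlen]
      refine Finset.sum_congr rfl fun q hq => ?_
      have e1 : w' (s + q) = w (t + q) := by
        have h1 : ¬ s + q < s := by omega
        have h2 : s + q + d = t + q := by omega
        simp [hw', h1, h2]
      have e2 : w' (s + q + 1) = w (t + q + 1) := by
        have h1 : ¬ s + q + 1 < s := by omega
        have h2 : s + q + 1 + d = t + q + 1 := by omega
        simp [hw', h1, h2]
      simp only [hf, e1, e2]
  rw [split1, wsplit, mid]
  have : ∀ x y z : EReal, x + (z + y) = (x + y) + z := fun x y z => by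
    rw [add_comm z y, add_assoc]
  exact this _ _ _

lemma pow_le_Q (hcyc : ∀ (w : ℕ → Fin n) (m : ℕ), w 0 = w (m+1) → Wt B w (m+1) ≤ 0)
    (r : ℕ) (i j : Fin n) : mpPow B r i j ≤ Q B i j := by
  induction r using Nat.strong_induction_on generalizing j with
  | _ r ih =>
  by_cases hr : r < n
  · exact le_iSup (fun k : Fin n => mpPow B (k : ℕ) i j) ⟨r, hr⟩
  push_neg at hr
  rcases pow_walk B r i j with hb | ⟨w, hw0, hwr, hwv⟩
  · rw [hb]; exact bot_le
  obtain ⟨a, b, hab, hwab⟩ := Fintype.exists_ne_map_eq_of_card_lt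
    (fun q : Fin (n+1) => w q) (by simp)
  obtain ⟨s, t, hst, hts, hwst⟩ : ∃ s t : ℕ, s < t ∧ t ≤ n ∧ w s = w t := by
    rcases hab.lt_or_gt with h | h
    · exact ⟨a, b, h, Nat.lt_succ_iff.1 b.isLt, hwab⟩
    · exact ⟨b, a, h, Nat.lt_succ_iff.1 a.isLt, hwab.symm⟩
  have htr : t ≤ r := le_trans hts hr
  have hsplice := splice B w hst htr hwst
  have hmid : Wt B (fun q => w (s + q)) (t - s) ≤ 0 := by
    obtain ⟨m, hm⟩ : ∃ m, t - s = m + 1 := ⟨t - s - 1, by omega⟩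
    rw [hm]
    refine hcyc _ _ ?_
    show w (s + 0) = w (s + (m+1))
    rw [← hm]
    have : s + (t - s) = t := by omega
    rw [Nat.add_zero, this, hwst]
  set w' : ℕ → Fin n := fun u => if u < s then w u else w (u + (t - s)) with hw'
  set r' := r - (t - s) with hr'
  have hW : Wt B w r ≤ Wt B w' r' := by
    rw [hsplice]
    calc Wt B w' r' + Wt B (fun q => w (s + q)) (t - s) ≤ Wt B w' r' + 0 :=
      add_le_add_right hmid _
    _ = Wt B w' r' := add_zero _
  have hw'0 : w' 0 = i := by
    rcases Nat.eq_zero_or_pos s with hs0 | hs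
    · have h1 : ¬ (0 : ℕ) < s := by omega
      have e : w' 0 = w (0 + (t - s)) := by simp [hw', h1]
      have h2 : 0 + (t - s) = t := by omega
      rw [e, h2, ← hwst, hs0, hw0]
    · simp [hw', hs, hw0]
  have hw'r : w' r' = j := by
    have h1 : ¬ r' < s := by omega
    have h2 : r' + (t - s) = r := by omega
    simp [hw', h1, h2, hwr]
  have hr'lt : r' < r := by omega
  calc mpPow B r i j = Wt B w r := hwv
  _ ≤ Wt B w' r' := hW
  _ ≤ mpPow B r' (w' 0) (w' r') := Wt_le_pow B w' r'
  _ = mpPow B r' i j := by rw [hw'0, hw'r]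
  _ ≤ Q B i j := ih r' hr'lt j



lemma pow_one_entry (i j : Fin n) : mpPow B 1 i j = B i j := by
  show (⨆ k, mpId i k + B k j) = B i j
  refine le_antisymm (iSup_le fun k => ?_) ?_
  · by_cases h : i = k
    · subst h; simp [mpId]
    · simp [mpId, h]
  · have := le_iSup (fun k => mpId i k + B k j) i
    simpa [mpId] using this

section Loop
variable {B}

lemma diag_nonneg {v : Fin n} (hv : B v v = 0) (s : ℕ) : (0 : EReal) ≤ mpPow B s v v := by
  induction s with
  | zero => simp [mpPow, mpId]
  | succ s ih =>
    have := pow_concat B s 1 v v v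
    rw [pow_one_entry B v v, hv, add_zero] at this
    exact le_trans ih this

lemma row_mono {v : Fin n} (hv : B v v = 0) (i : Fin n) {k r : ℕ} (hkr : k ≤ r) :
    mpPow B k i v ≤ mpPow B r i v := by
  have := pow_concat B k (r - k) i v v
  have hk : k + (r - k) = r := by omega
  rw [hk] at this
  calc mpPow B k i v = mpPow B k i v + 0 := (add_zero _).symm
  _ ≤ mpPow B k i v + mpPow B (r - k) v v := add_le_add_right (diag_nonneg hv _) _
  _ ≤ mpPow B r i v := this

lemma col_mono {v : Fin n} (hv : B v v = 0) (j : Fin n) {k r : ℕ} (hkr : k ≤ r) :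
    mpPow B k v j ≤ mpPow B r v j := by
  have := pow_concat B (r - k) k v v j
  have hk : (r - k) + k = r := by omega
  rw [hk] at this
  calc mpPow B k v j = 0 + mpPow B k v j := (zero_add _).symm
  _ ≤ mpPow B (r - k) v v + mpPow B k v j := add_le_add_left (diag_nonneg hv _) _
  _ ≤ mpPow B r v j := this

variable (hcyc : ∀ (w : ℕ → Fin n) (m : ℕ), w 0 = w (m+1) → Wt B w (m+1) ≤ 0)
include hcyc

lemma row_stab {v : Fin n} (hv : B v v = 0) (i : Fin n) {r : ℕ} (hr : n ≤ r) :
    mpPow B r i v = Q B i v := by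
  refine le_antisymm (pow_le_Q B hcyc r i v) (iSup_le fun k => ?_)
  exact row_mono hv i (le_trans (Nat.le_of_lt_succ (Nat.lt_succ_of_lt k.isLt)) hr)

lemma col_stab {v : Fin n} (hv : B v v = 0) (j : Fin n) {r : ℕ} (hr : n ≤ r) :
    mpPow B r v j = Q B v j := by
  refine le_antisymm (pow_le_Q B hcyc r v j) (iSup_le fun k => ?_)
  exact col_mono hv j (le_trans (Nat.le_of_lt_succ (Nat.lt_succ_of_lt k.isLt)) hr)

end Loop

/-- The candidate limit matrix. -/
def MM (B : Matrix (Fin n) (Fin n) EReal) (i j : Fin n) : EReal :=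
  ⨆ v : Fin n, if B v v = 0 then Q B i v + Q B v j else ⊥

lemma MM_le_pow {B : Matrix (Fin n) (Fin n) EReal}
    (hcyc : ∀ (w : ℕ → Fin n) (m : ℕ), w 0 = w (m+1) → Wt B w (m+1) ≤ 0)
    (i j : Fin n) {r : ℕ} (hr : 2 * n ≤ r) : MM B i j ≤ mpPow B r i j := by
  refine iSup_le fun v => ?_
  by_cases hv : B v v = 0
  · rw [if_pos hv]
    have h1 : mpPow B n i v = Q B i v := row_stab hcyc hv i le_rfl
    have h2 : mpPow B (r - n) v j = Q B v j := col_stab hcyc hv j (by omega)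
    have h3 := pow_concat B n (r - n) i v j
    have hn : n + (r - n) = r := by omega
    rw [hn, h1, h2] at h3
    exact h3
  · rw [if_neg hv]; exact bot_le

lemma exists_neg_bound (S : Finset EReal) :
    ∃ δ : ℝ, 0 < δ ∧ ∀ x ∈ S, x < 0 → x ≤ ((-δ : ℝ) : EReal) := by
  classical
  induction S using Finset.induction_on with
  | empty => exact ⟨1, one_pos, by simp⟩
  | @insert x S hx ih =>
    obtain ⟨δ, hδ, hb⟩ := ih
    by_cases hneg : x < 0
    · have hx' : ∃ ε : ℝ, 0 < ε ∧ x ≤ ((-ε : ℝ) : EReal) := by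
        induction x using EReal.rec with
        | bot => exact ⟨1, one_pos, bot_le⟩
        | coe y =>
          have hy : y < 0 := by exact_mod_cast hneg
          exact ⟨-y, by linarith, by rw [neg_neg]⟩
        | top => exact absurd hneg (by simp)
      obtain ⟨ε, hε, hxε⟩ := hx'
      refine ⟨min δ ε, lt_min hδ hε, ?_⟩
      intro y hy hyneg
      rcases Finset.mem_insert.1 hy with rfl | hyS
      · refine le_trans hxε ?_
        exact EReal.coe_le_coe_iff.2 (by have := min_le_right δ ε; linarith)
      · refine le_trans (hb y hyS hyneg) ?_
        exact EReal.coe_le_coe_iff.2 (by have := min_le_left δ ε; linarith)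
    · refine ⟨δ, hδ, ?_⟩
      intro y hy hyneg
      rcases Finset.mem_insert.1 hy with rfl | hyS
      · exact absurd hyneg hneg
      · exact hb y hyS hyneg

section Crit
variable {B} {crit : Fin n → Prop}

lemma exists_delta
    (hcyc : ∀ (w : ℕ → Fin n) (m : ℕ), w 0 = w (m+1) → Wt B w (m+1) ≤ 0)
    (hzero : ∀ (w : ℕ → Fin n) (m : ℕ), w 0 = w (m+1) → Wt B w (m+1) = 0 → crit (w 0)) :
    ∃ δ : ℝ, 0 < δ ∧ ∀ (w : ℕ → Fin n) (m : ℕ), m + 1 ≤ n → w 0 = w (m+1) →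
      ¬ crit (w 0) → Wt B w (m+1) ≤ ((-δ : ℝ) : EReal) := by
  classical
  set G : ((Fin (n+1) → Fin n) × Fin n) → EReal :=
    fun p => Wt B (fun t => p.1 ⟨min t n, by omega⟩) (p.2 + 1) with hG
  obtain ⟨δ, hδ, hb⟩ := exists_neg_bound (Finset.image G Finset.univ)
  refine ⟨δ, hδ, fun w m hm hw hc => ?_⟩
  have hGval : Wt B w (m+1) = G (fun q => w q, ⟨m, by omega⟩) := by
    simp only [hG, Wt]
    refine Finset.sum_congr rfl fun t ht => ?_
    have ht' := Finset.mem_range.1 ht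
    have h1 : min t n = t := by omega
    have h2 : min (t+1) n = t+1 := by omega
    simp only [h1, h2]
  have hlt : Wt B w (m+1) < 0 :=
    lt_of_le_of_ne (hcyc w m hw) (fun h0 => hc (hzero w m hw h0))
  have hmem : Wt B w (m+1) ∈ Finset.image G Finset.univ := by
    rw [hGval]; exact Finset.mem_image_of_mem _ (Finset.mem_univ _)
  exact hb _ hmem hlt

lemma walk_noncrit_bound
    (hcyc : ∀ (w : ℕ → Fin n) (m : ℕ), w 0 = w (m+1) → Wt B w (m+1) ≤ 0)
    {δ : ℝ}
    (hSN : ∀ (w : ℕ → Fin n) (m : ℕ), m + 1 ≤ n → w 0 = w (m+1) →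
      ¬ crit (w 0) → Wt B w (m+1) ≤ ((-δ : ℝ) : EReal))
    (hδ : 0 < δ) (r : ℕ) (w : ℕ → Fin n) (havoid : ∀ t ≤ r, ¬ crit (w t)) :
    Wt B w r ≤ Q B (w 0) (w r) + ((-δ * ((r / n : ℕ) : ℝ) : ℝ) : EReal) := by
  have hn0 : 0 < n := Nat.pos_of_ne_zero (NeZero.ne n)
  induction r using Nat.strong_induction_on generalizing w with
  | _ r ih =>
  by_cases hr : r < n
  · have h0 : (r / n : ℕ) = 0 := Nat.div_eq_of_lt hr
    rw [h0]
    simp only [Nat.cast_zero, mul_zero, EReal.coe_zero, add_zero]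
    exact le_trans (Wt_le_pow B w r) (pow_le_Q B hcyc r (w 0) (w r))
  push_neg at hr
  obtain ⟨a, b, hab, hwab⟩ := Fintype.exists_ne_map_eq_of_card_lt
    (fun q : Fin (n+1) => w q) (by simp)
  obtain ⟨s, t, hst, hts, hwst⟩ : ∃ s t : ℕ, s < t ∧ t ≤ n ∧ w s = w t := by
    rcases hab.lt_or_gt with h | h
    · exact ⟨a, b, h, Nat.lt_succ_iff.1 b.isLt, hwab⟩
    · exact ⟨b, a, h, Nat.lt_succ_iff.1 a.isLt, hwab.symm⟩
  have htr : t ≤ r := le_trans hts hr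
  have hsplice := splice B w hst htr hwst
  have hmid : Wt B (fun q => w (s + q)) (t - s) ≤ ((-δ : ℝ) : EReal) := by
    obtain ⟨m, hm⟩ : ∃ m, t - s = m + 1 := ⟨t - s - 1, by omega⟩
    rw [hm]
    refine hSN _ m (by omega) ?_ ?_
    · show w (s + 0) = w (s + (m+1))
      rw [← hm]
      have h2 : s + (t - s) = t := by omega
      rw [Nat.add_zero, h2, hwst]
    · show ¬ crit (w (s + 0))
      rw [Nat.add_zero]
      exact havoid s (by omega)
  set w' : ℕ → Fin n := fun u => if u < s then w u else w (u + (t - s)) with hw'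
  set r' := r - (t - s) with hr'
  have havoid' : ∀ u ≤ r', ¬ crit (w' u) := by
    intro u hu
    by_cases h : u < s
    · simpa [hw', h] using havoid u (by omega)
    · simpa [hw', h] using havoid (u + (t - s)) (by omega)
  have hw'0 : w' 0 = w 0 := by
    rcases Nat.eq_zero_or_pos s with hs0 | hs
    · have h1 : ¬ (0 : ℕ) < s := by omega
      have e : w' 0 = w (0 + (t - s)) := by simp [hw', h1]
      have h2 : 0 + (t - s) = t := by omega
      rw [e, h2, ← hwst, hs0]
    · simp [hw', hs]
  have hw'r : w' r' = w r := by
    have h1 : ¬ r' < s := by omega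
    have h2 : r' + (t - s) = r := by omega
    simp [hw', h1, h2]
  have hIH := ih r' (by omega) w' havoid'
  rw [hw'0, hw'r] at hIH
  have hdiv : ((r / n : ℕ) : ℝ) ≤ ((r' / n : ℕ) : ℝ) + 1 := by
    have h1 : r ≤ r' + n := by omega
    have h2 : r / n ≤ (r' + n) / n := Nat.div_le_div_right h1
    rw [Nat.add_div_right _ hn0] at h2
    exact_mod_cast h2
  calc Wt B w r = Wt B w' r' + Wt B (fun q => w (s + q)) (t - s) := hsplice
  _ ≤ (Q B (w 0) (w r) + ((-δ * ((r' / n : ℕ) : ℝ) : ℝ) : EReal)) + ((-δ : ℝ) : EReal) :=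
      add_le_add hIH hmid
  _ = Q B (w 0) (w r) + ((-δ * ((r' / n : ℕ) : ℝ) + (-δ) : ℝ) : EReal) := by
      rw [add_assoc, ← EReal.coe_add]
  _ ≤ Q B (w 0) (w r) + ((-δ * ((r / n : ℕ) : ℝ) : ℝ) : EReal) := by
      refine add_le_add_right (EReal.coe_le_coe_iff.2 ?_) _
      nlinarith [hdiv, hδ]

end Crit

section Crit2
variable {B} {crit : Fin n → Prop}

lemma ne_bot_of_le {x y : EReal} (hx : x ≠ ⊥) (h : x ≤ y) : y ≠ ⊥ :=
  fun h' => hx (le_bot_iff.1 (h' ▸ h))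

lemma walk_crit_bound
    (hcyc : ∀ (w : ℕ → Fin n) (m : ℕ), w 0 = w (m+1) → Wt B w (m+1) ≤ 0)
    (hloop : ∀ v, crit v → ∃ u, B u u = 0 ∧ ∃ (a b : ℕ) (p : ℝ),
      ((p : ℝ) : EReal) ≤ mpPow B a v u ∧ ((-p : ℝ) : EReal) ≤ mpPow B b u v)
    (r : ℕ) (w : ℕ → Fin n) {t0 : ℕ} (ht0 : t0 ≤ r) (hcr : crit (w t0)) :
    Wt B w r ≤ MM B (w 0) (w r) := by
  set v := w t0 with hv
  set X := mpPow B t0 (w 0) v with hX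
  set Y := mpPow B (r - t0) v (w r) with hY
  have hsplit : Wt B w r ≤ X + Y := by
    have e1 : Wt B w r = Wt B w t0 + ∑ u ∈ Finset.Ico t0 r, B (w u) (w (u+1)) := by
      rw [Wt, Wt, Finset.range_eq_Ico, Finset.range_eq_Ico]
      exact (Finset.sum_Ico_consecutive (fun u => B (w u) (w (u+1))) (Nat.zero_le t0) ht0).symm
    have e2 : (∑ u ∈ Finset.Ico t0 r, B (w u) (w (u+1)))
        = Wt B (fun q => w (t0 + q)) (r - t0) := by
      rw [Finset.sum_Ico_eq_sum_range]
      rfl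
    have h1 : Wt B w t0 ≤ X := Wt_le_pow B w t0
    have h2 : Wt B (fun q => w (t0 + q)) (r - t0) ≤ Y := by
      have := Wt_le_pow B (fun q => w (t0 + q)) (r - t0)
      have ha : t0 + (r - t0) = r := by omega
      simpa [ha] using this
    rw [e1, e2]
    exact add_le_add h1 h2
  obtain ⟨u, huu, a, b, p, hp1, hp2⟩ := hloop v hcr
  have key1 : X + ((p : ℝ) : EReal) ≤ mpPow B (t0 + a) (w 0) u :=
    le_trans (add_le_add_right hp1 X) (pow_concat B t0 a (w 0) v u)
  have key2 : ((-p : ℝ) : EReal) + Y ≤ mpPow B (b + (r - t0)) u (w r) :=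
    le_trans (add_le_add_left hp2 Y) (pow_concat B b (r - t0) u v (w r))
  have hre : (X + ((p : ℝ) : EReal)) + (((-p : ℝ) : EReal) + Y) = X + Y := by
    have hpp : ((p : ℝ) : EReal) + ((-p : ℝ) : EReal) = 0 := by
      rw [← EReal.coe_add]
      norm_num
    rw [add_assoc X, ← add_assoc ((p : ℝ) : EReal), hpp, zero_add]
  have hQMM : Q B (w 0) u + Q B u (w r) ≤ MM B (w 0) (w r) := by
    have := le_iSup (fun v : Fin n => if B v v = 0 then Q B (w 0) v + Q B v (w r) else ⊥) u
    rwa [if_pos huu] at this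
  calc Wt B w r ≤ X + Y := hsplit
  _ = (X + ((p : ℝ) : EReal)) + (((-p : ℝ) : EReal) + Y) := hre.symm
  _ ≤ mpPow B (t0 + a) (w 0) u + mpPow B (b + (r - t0)) u (w r) := add_le_add key1 key2
  _ ≤ Q B (w 0) u + Q B u (w r) :=
      add_le_add (pow_le_Q B hcyc _ (w 0) u) (pow_le_Q B hcyc _ u (w r))
  _ ≤ MM B (w 0) (w r) := hQMM

theorem key_stab (hBtop : ∀ i j, B i j ≠ ⊤)
    (hcyc : ∀ (w : ℕ → Fin n) (m : ℕ), w 0 = w (m+1) → Wt B w (m+1) ≤ 0)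
    (hzero : ∀ (w : ℕ → Fin n) (m : ℕ), w 0 = w (m+1) → Wt B w (m+1) = 0 → crit (w 0))
    (hloop : ∀ v, crit v → ∃ u, B u u = 0 ∧ ∃ (a b : ℕ) (p : ℝ),
      ((p : ℝ) : EReal) ≤ mpPow B a v u ∧ ((-p : ℝ) : EReal) ≤ mpPow B b u v)
    (hirrB : ∀ i j, ∃ a, mpPow B a i j ≠ ⊥)
    (hex : ∃ v, B v v = 0) :
    ∃ R : ℕ, ∀ r, R ≤ r → (∀ i j, mpPow B r i j ≠ ⊥) ∧ mpPow B (r+1) = mpPow B r := by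
  classical
  have hn0 : 0 < n := Nat.pos_of_ne_zero (NeZero.ne n)
  have hMMbot : ∀ i j, MM B i j ≠ ⊥ := by
    intro i j
    obtain ⟨v, hv⟩ := hex
    obtain ⟨a, ha⟩ := hirrB i v
    obtain ⟨b, hb⟩ := hirrB v j
    have hQ1 : Q B i v ≠ ⊥ := ne_bot_of_le ha (pow_le_Q B hcyc a i v)
    have hQ2 : Q B v j ≠ ⊥ := ne_bot_of_le hb (pow_le_Q B hcyc b v j)
    have hsum : Q B i v + Q B v j ≠ ⊥ := by
      rw [Ne, EReal.add_eq_bot_iff]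
      push_neg
      exact ⟨hQ1, hQ2⟩
    refine ne_bot_of_le hsum ?_
    have := le_iSup (fun v : Fin n => if B v v = 0 then Q B i v + Q B v j else ⊥) v
    rwa [if_pos hv] at this
  have hQtop : ∀ i j, Q B i j ≠ ⊤ := by
    intro i j
    obtain ⟨k, hk⟩ := finMax' (fun k : Fin n => mpPow B (k : ℕ) i j)
    rw [Q, hk]
    exact pow_ne_top B hBtop _ i j
  have hπ : ∀ p : Fin n × Fin n, ∃ c : ℝ, Q B p.1 p.2 ≤ (c : EReal) :=
    fun p => ⟨(Q B p.1 p.2).toReal, EReal.le_coe_toReal (hQtop p.1 p.2)⟩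
  have hμ : ∀ p : Fin n × Fin n, ∃ c : ℝ, (c : EReal) ≤ MM B p.1 p.2 :=
    fun p => ⟨(MM B p.1 p.2).toReal, EReal.coe_toReal_le (hMMbot p.1 p.2)⟩
  choose πf hπf using hπ
  choose μf hμf using hμ
  set πg : ℝ := Finset.univ.sup' Finset.univ_nonempty πf with hπg
  set μg : ℝ := Finset.univ.inf' Finset.univ_nonempty μf with hμg
  have hQg : ∀ i j, Q B i j ≤ (πg : EReal) := fun i j =>
    le_trans (hπf (i, j)) (EReal.coe_le_coe_iff.2 (Finset.le_sup' πf (Finset.mem_univ (i, j))))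
  have hMg : ∀ i j, (μg : EReal) ≤ MM B i j := fun i j =>
    le_trans (EReal.coe_le_coe_iff.2 (Finset.inf'_le μf (Finset.mem_univ (i, j)))) (hμf (i, j))
  obtain ⟨δ, hδ, hSN⟩ := exists_delta hcyc hzero
  set K : ℕ := Nat.ceil ((πg - μg) / δ) with hK
  set R : ℕ := max (2 * n) (n * K) with hR
  have hup : ∀ r, R ≤ r → ∀ i j, mpPow B r i j ≤ MM B i j := by
    intro r hrR i j
    rcases pow_walk B r i j with hb | ⟨w, hw0, hwr, hwv⟩
    · rw [hb]; exact bot_le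
    rw [hwv, ← hw0, ← hwr]
    by_cases hc : ∃ t, t ≤ r ∧ crit (w t)
    · obtain ⟨t0, ht0, hcr⟩ := hc
      exact walk_crit_bound hcyc hloop r w ht0 hcr
    · push_neg at hc
      have hbound := walk_noncrit_bound hcyc hSN hδ r w hc
      have hKdiv : K ≤ r / n := by
        rw [Nat.le_div_iff_mul_le hn0]
        calc K * n = n * K := Nat.mul_comm K n
        _ ≤ R := le_max_right _ _
        _ ≤ r := hrR
      have hreal : πg + (-δ * ((r / n : ℕ) : ℝ)) ≤ μg := by
        have h1 : ((πg - μg) / δ) ≤ (K : ℝ) := Nat.le_ceil _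
        have h2 : (K : ℝ) ≤ ((r / n : ℕ) : ℝ) := by exact_mod_cast hKdiv
        have h3 : πg - μg ≤ δ * K := by
          rw [div_le_iff₀ hδ] at h1
          linarith
        nlinarith
      calc Wt B w r ≤ Q B (w 0) (w r) + ((-δ * ((r / n : ℕ) : ℝ) : ℝ) : EReal) := hbound
      _ ≤ (πg : EReal) + ((-δ * ((r / n : ℕ) : ℝ) : ℝ) : EReal) :=
          add_le_add_left (hQg _ _) _
      _ = ((πg + (-δ * ((r / n : ℕ) : ℝ)) : ℝ) : EReal) := (EReal.coe_add _ _).symm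
      _ ≤ ((μg : ℝ) : EReal) := EReal.coe_le_coe_iff.2 hreal
      _ ≤ MM B (w 0) (w r) := hMg _ _
  have heq : ∀ r, R ≤ r → ∀ i j, mpPow B r i j = MM B i j := by
    intro r hrR i j
    refine le_antisymm (hup r hrR i j) (MM_le_pow hcyc i j ?_)
    exact le_trans (le_max_left _ _) hrR

  refine ⟨R, fun r hrR => ⟨?_, ?_⟩⟩
  · intro i j
    rw [heq r hrR i j]
    exact hMMbot i j
  · funext i j
    rw [heq (r+1) (by omega) i j, heq r hrR i j]

end Crit2

-- general EReal sum lemmas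
lemma sum_add_const {γ : Type*} (s : Finset γ) (f : γ → EReal) (c : ℝ) :
    ∑ x ∈ s, (f x + (c : EReal)) = (∑ x ∈ s, f x) + (((s.card : ℝ) * c : ℝ) : EReal) := by
  classical
  induction s using Finset.induction_on with
  | empty => simp
  | @insert a s ha ih =>
    rw [Finset.sum_insert ha, Finset.sum_insert ha, ih, Finset.card_insert_of_notMem ha]
    have hc : (((s.card + 1 : ℕ) : ℝ) * c : ℝ) = ((s.card : ℝ) * c) + c := by
      push_cast; ring
    rw [hc, EReal.coe_add]
    have : ∀ x y u v : EReal, (x + u) + (y + v) = (x + y) + (v + u) := fun x y u v => by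
      rw [add_assoc, add_comm u (y + v), add_assoc y, add_assoc]
    exact this _ _ _ _

lemma sum_eq_bot {γ : Type*} (s : Finset γ) (f : γ → EReal)
    (htop : ∀ a ∈ s, f a ≠ ⊤) (hbot : ∃ a ∈ s, f a = ⊥) : ∑ x ∈ s, f x = ⊥ := by
  classical
  induction s using Finset.induction_on with
  | empty => simp at hbot
  | @insert a s ha ih =>
    rw [Finset.sum_insert ha, EReal.add_eq_bot_iff]
    rcases hbot with ⟨b, hb, hbv⟩
    rcases Finset.mem_insert.1 hb with rfl | hbs
    · exact Or.inl hbv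
    · refine Or.inr (ih (fun x hx => htop x (Finset.mem_insert_of_mem hx)) ⟨b, hbs, hbv⟩)

lemma sum_ne_bot_of {γ : Type*} (s : Finset γ) (f : γ → EReal)
    (htop : ∀ a ∈ s, f a ≠ ⊤) (hne : ∑ x ∈ s, f x ≠ ⊥) : ∀ a ∈ s, f a ≠ ⊥ := by
  intro a ha hav
  exact hne (sum_eq_bot s f htop ⟨a, ha, hav⟩)

lemma ecancel {x : EReal} {c y : ℝ} (h : x + (c : EReal) = (y : EReal)) :
    x = ((y - c : ℝ) : EReal) := by
  induction x using EReal.rec with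
  | bot => rw [EReal.bot_add] at h; exact absurd h.symm (EReal.coe_ne_bot y)
  | coe z =>
    rw [← EReal.coe_add] at h
    have : z + c = y := by exact_mod_cast h
    have : z = y - c := by linarith
    exact_mod_cast this
  | top => rw [EReal.top_add_coe] at h; exact absurd h.symm (EReal.coe_ne_top y)

lemma le_zero_of_add_coe {x : EReal} {c : ℝ} (h : x + (c : EReal) ≤ (c : EReal)) :
    x ≤ 0 := by
  induction x using EReal.rec with
  | bot => exact bot_le
  | coe z =>
    rw [← EReal.coe_add, EReal.coe_le_coe_iff] at h
    have : z ≤ 0 := by linarith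
    exact_mod_cast this
  | top => rw [EReal.top_add_coe] at h; exact absurd h (by simp)

end MP13
namespace MP13
set_option linter.unusedSectionVars false
variable {n : ℕ} [NeZero n] (B : Matrix (Fin n) (Fin n) EReal)

lemma cyc_of_walk (m : ℕ) (w : ℕ → Fin n) (hw : w 0 = w (m+1)) :
    cycWeight B (fun i : Fin (m+1) => w i.val) = Wt B w (m+1) := by
  set f : ℕ → EReal := fun t => B (w t) (w (if t = m then 0 else t+1)) with hf
  have h1 : cycWeight B (fun i : Fin (m+1) => w i.val) = ∑ i : Fin (m+1), f i.val := by
    rw [cycWeight]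
    refine Finset.sum_congr rfl fun i _ => ?_
    rw [hf]
    by_cases h : i = Fin.last m
    · have hv : i.val = m := by rw [h]; rfl
      rw [Fin.val_add_one]
      simp [h, hv]
    · have hv : i.val ≠ m := fun hh => h (Fin.ext hh)
      rw [Fin.val_add_one]
      simp [h, hv]
  have h2 : ∑ i : Fin (m+1), f i.val = ∑ t ∈ Finset.range (m+1), f t :=
    Fin.sum_univ_eq_sum_range f (m+1)
  have h3 : ∑ t ∈ Finset.range (m+1), f t = Wt B w (m+1) := by
    rw [Wt]
    refine Finset.sum_congr rfl fun t ht => ?_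
    rw [hf]
    by_cases h : t = m
    · subst h; simp [← hw]
    · simp [h]
  rw [h1, h2, h3]

lemma cyc_rot {m : ℕ} (c : Fin (m+1) → Fin n) (d : Fin (m+1)) :
    cycWeight B (fun i => c (d + i)) = cycWeight B c := by
  rw [cycWeight, cycWeight]
  refine Fintype.sum_equiv (Equiv.addLeft d) _ _ fun i => ?_
  simp only [Equiv.coe_addLeft]
  rw [add_assoc]

open Fin.NatCast in
lemma cyc_complement {m : ℕ} {c : Fin (m+1) → Fin n} {k : Fin (m+1)}
    (hc0 : cycWeight B c = 0) {q : ℝ} (hq : B (c k) (c (k+1)) = (q : EReal)) :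
    ((-q : ℝ) : EReal) ≤ mpPow B m (c (k+1)) (c k) := by
  set w : ℕ → Fin n := fun t => c (k + 1 + ((t : ℕ) : Fin (m+1))) with hwdef
  have hm0 : ((m : ℕ) : Fin (m+1)) + 1 = 0 := by
    rw [← Nat.cast_add_one]; exact Fin.natCast_self (m+1)
  have hwm : w m = c k := by
    rw [hwdef]
    show c (k + 1 + ((m : ℕ) : Fin (m+1))) = c k
    congr 1
    have e : k + 1 + ((m:ℕ) : Fin (m+1)) = k + (((m:ℕ) : Fin (m+1)) + 1) := by
      rw [add_assoc, add_comm 1]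
    rw [e, hm0, add_zero]
  have hw0 : w 0 = c (k+1) := by
    rw [hwdef]
    show c (k + 1 + ((0 : ℕ) : Fin (m+1))) = c (k+1)
    norm_num
  have hwcl : w 0 = w (m+1) := by
    rw [hw0, hwdef]
    show c (k+1) = c (k + 1 + (((m+1 : ℕ)) : Fin (m+1)))
    rw [Fin.natCast_self (m+1), add_zero]
  have hrot : cycWeight B (fun i : Fin (m+1) => w i.val) = cycWeight B c := by
    have e : (fun i : Fin (m+1) => w i.val) = fun i => c (k + 1 + i) := by
      funext i; rw [hwdef]; simp [Fin.cast_val_eq_self]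
    rw [e]; exact cyc_rot B c (k+1)
  have hWt : Wt B w (m+1) = ((0 : ℝ) : EReal) := by
    rw [← cyc_of_walk B m w hwcl, hrot, hc0]; rfl
  have hsplit : Wt B w (m+1) = Wt B w m + B (w m) (w (m+1)) := Finset.sum_range_succ _ _
  have hlast : B (w m) (w (m+1)) = (q : EReal) := by rw [hwm, ← hwcl, hw0, hq]
  have hWm : Wt B w m = ((0 - q : ℝ) : EReal) := by
    refine ecancel ?_
    rw [← hlast, ← hsplit, hWt]
  have := Wt_le_pow B w m
  rw [hWm, hw0, hwm] at this
  have he : ((-q : ℝ) : EReal) = ((0 - q : ℝ) : EReal) := by norm_num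
  rw [he]
  exact this

end MP13
namespace MP13
set_option linter.unusedSectionVars false
variable {n : ℕ} [NeZero n]

lemma addSup {α : Type*} [Finite α] [Nonempty α] (c : EReal) (f : α → EReal) :
    c + (⨆ j, f j) = ⨆ j, (c + f j) := by
  obtain ⟨k, hk⟩ := finMax' f
  rw [hk]
  refine le_antisymm (le_iSup (fun j => c + f j) k) (iSup_le fun j => ?_)
  refine add_le_add_right ?_ c
  rw [← hk]; exact le_iSup f j

lemma supAdd {α : Type*} [Finite α] [Nonempty α] (c : EReal) (f : α → EReal) :
    (⨆ j, f j) + c = ⨆ j, (f j + c) := by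
  rw [add_comm, addSup]
  simp_rw [add_comm]

lemma mpMul_assoc (P Q R : Matrix (Fin n) (Fin n) EReal) :
    mpMul (mpMul P Q) R = mpMul P (mpMul Q R) := by
  funext i l
  show (⨆ k, (⨆ m, P i m + Q m k) + R k l) = ⨆ m, P i m + ⨆ k, Q m k + R k l
  simp_rw [supAdd, addSup, add_assoc]
  exact iSup_comm

lemma mpVec_assoc (P Q : Matrix (Fin n) (Fin n) EReal) (x : Fin n → EReal) :
    mpMulVec (mpMul P Q) x = mpMulVec P (mpMulVec Q x) := by
  funext i
  show (⨆ k, (⨆ m, P i m + Q m k) + x k) = ⨆ m, P i m + ⨆ k, Q m k + x k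
  simp_rw [supAdd, addSup, add_assoc]
  exact iSup_comm

lemma mpMul_id (P : Matrix (Fin n) (Fin n) EReal) : mpMul P mpId = P := by
  funext i j
  show (⨆ k, P i k + mpId k j) = P i j
  refine le_antisymm (iSup_le fun k => ?_) ?_
  · by_cases h : k = j
    · subst h; simp [mpId]
    · simp [mpId, h]
  · have := le_iSup (fun k => P i k + mpId k j) j
    simpa [mpId] using this

lemma mpId_mul (P : Matrix (Fin n) (Fin n) EReal) : mpMul mpId P = P := by
  funext i j
  show (⨆ k, mpId i k + P k j) = P i j
  refine le_antisymm (iSup_le fun k => ?_) ?_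
  · by_cases h : i = k
    · subst h; simp [mpId]
    · simp [mpId, h]
  · have := le_iSup (fun k => mpId i k + P k j) i
    simpa [mpId] using this

lemma mpPow_succ' (B : Matrix (Fin n) (Fin n) EReal) (r : ℕ) :
    mpPow B (r+1) = mpMul B (mpPow B r) := by
  induction r with
  | zero => show mpMul mpId B = mpMul B mpId; rw [mpMul_id, mpId_mul]
  | succ r ih =>
    show mpMul (mpPow B (r+1)) B = mpMul B (mpMul (mpPow B r) B)
    rw [← mpMul_assoc, ← ih]

lemma powAB {A B : Matrix (Fin n) (Fin n) EReal} {lam : ℝ}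
    (hAB : ∀ i j, A i j = B i j + (lam : EReal)) (r : ℕ) (i j : Fin n) :
    mpPow A r i j = mpPow B r i j + ((((r : ℕ) : ℝ) * lam : ℝ) : EReal) := by
  induction r generalizing j with
  | zero => norm_num [mpPow]
  | succ r ih =>
    show (⨆ k, mpPow A r i k + A k j) = (⨆ k, mpPow B r i k + B k j) + _
    rw [supAdd]
    refine iSup_congr fun k => ?_
    rw [ih k, hAB k j, add_add_add_comm, ← EReal.coe_add]
    have hc : ((r : ℕ) : ℝ) * lam + lam = (((r+1 : ℕ) : ℝ) * lam : ℝ) := by push_cast; ring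
    rw [hc]

lemma vec_of_entry {P Q : Matrix (Fin n) (Fin n) EReal} {c : ℝ}
    (h : ∀ i j, P i j = Q i j + (c : EReal)) (x : Fin n → EReal) (i : Fin n) :
    mpMulVec P x i = mpMulVec Q x i + (c : EReal) := by
  show (⨆ j, P i j + x j) = (⨆ j, Q i j + x j) + (c : EReal)
  rw [supAdd]
  exact iSup_congr fun j => by rw [h i j, add_right_comm]

lemma vec_shift (C : Matrix (Fin n) (Fin n) EReal) (x : Fin n → EReal) (c : ℝ) (i : Fin n) :
    mpMulVec C (fun j => x j + (c : EReal)) i = mpMulVec C x i + (c : EReal) := by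
  show (⨆ j, C i j + (x j + (c : EReal))) = (⨆ j, C i j + x j) + (c : EReal)
  rw [supAdd]
  exact iSup_congr fun j => (add_assoc _ _ _).symm

end MP13

theorem stmt_13 {n : ℕ} (A : Matrix (Fin n) (Fin n) EReal)
    (hA : ∀ i j, A i j ≠ ⊤) (hirr : mpIrreducible A)
    (lam : ℝ) (hmax : isMaxCycleMean A lam)
    (hdiag : ∀ v, critVertex A lam v →
      ∃ i, sameCritSCC A lam v i ∧ A i i = (lam : EReal)) :
    mpRobust A := by
  classical
  rcases Nat.eq_zero_or_pos n with hn | hn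
  · subst hn
    intro x hxt hxb
    exact absurd (funext fun i => i.elim0) hxb
  haveI : NeZero n := ⟨hn.ne'⟩
  set B : Matrix (Fin n) (Fin n) EReal := fun i j => A i j + ((-lam : ℝ) : EReal) with hBdef
  have hBentry : ∀ i j, B i j = A i j + ((-lam : ℝ) : EReal) := fun i j => rfl
  have hAB : ∀ i j, A i j = B i j + (lam : EReal) := by
    intro i j
    rw [hBentry i j, add_assoc, ← EReal.coe_add]
    norm_num
  have hBbot : ∀ i j, (B i j = ⊥ ↔ A i j = ⊥) := by
    intro i j
    rw [hBentry i j, EReal.add_eq_bot_iff]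
    simp [EReal.coe_ne_bot]
  have hBtop : ∀ i j, B i j ≠ ⊤ := fun i j => by
    rw [hBentry i j]
    exact (EReal.add_lt_top (hA i j) (EReal.coe_ne_top _)).ne
  have hcycAB : ∀ (m : ℕ) (c : Fin (m+1) → Fin n),
      cycWeight A c = cycWeight B c + ((((m+1 : ℕ) : ℝ) * lam : ℝ) : EReal) := by
    intro m c
    have h1 : cycWeight B c = cycWeight A c + ((((m+1 : ℕ) : ℝ) * (-lam) : ℝ) : EReal) := by
      rw [cycWeight, cycWeight]
      simp_rw [hBentry]
      have := MP13.sum_add_const (Finset.univ : Finset (Fin (m+1)))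
        (fun i => A (c i) (c (i+1))) (-lam)
      simpa using this
    rw [h1, add_assoc, ← EReal.coe_add]
    have : (((m+1 : ℕ) : ℝ) * (-lam) + ((m+1 : ℕ) : ℝ) * lam : ℝ) = 0 := by ring
    rw [this, EReal.coe_zero, add_zero]
  have hcycB : ∀ (w : ℕ → Fin n) (m : ℕ), w 0 = w (m+1) → MP13.Wt B w (m+1) ≤ 0 := by
    intro w m hw
    rw [← MP13.cyc_of_walk B m w hw]
    set c : Fin (m+1) → Fin n := fun i => w i.val with hc
    by_cases hcy : isCycle A c
    · have h2 := hmax.2 m c hcy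
      have h3 := hcycAB m c
      have hX : ((((m : ℝ) + 1) * lam : ℝ) : EReal) = ((((m+1 : ℕ) : ℝ) * lam : ℝ) : EReal) :=
        EReal.coe_eq_coe_iff.2 (by push_cast; ring)
      rw [h3, hX] at h2
      exact MP13.le_zero_of_add_coe h2
    · simp only [isCycle, not_forall, not_not] at hcy
      obtain ⟨i, hi⟩ := hcy
      have hb : cycWeight B c = ⊥ := by
        rw [cycWeight]
        exact MP13.sum_eq_bot _ _ (fun a _ => hBtop _ _)
          ⟨i, Finset.mem_univ i, (hBbot _ _).2 hi⟩
      rw [hb]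
      exact bot_le
  have hzeroB : ∀ (w : ℕ → Fin n) (m : ℕ), w 0 = w (m+1) → MP13.Wt B w (m+1) = 0 →
      critVertex A lam (w 0) := by
    intro w m hw h0
    set c : Fin (m+1) → Fin n := fun i => w i.val with hc
    have hcycW : cycWeight B c = 0 := by rw [MP13.cyc_of_walk B m w hw]; exact h0
    have hedges : isCycle A c := by
      intro i hbot
      have hb : cycWeight B c = ⊥ := by
        rw [cycWeight]
        exact MP13.sum_eq_bot _ _ (fun a _ => hBtop _ _)
          ⟨i, Finset.mem_univ i, (hBbot _ _).2 hbot⟩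
      rw [hb] at hcycW
      exact absurd hcycW (by simp)
    have hcca : cycWeight A c = ((((m : ℝ) + 1) * lam : ℝ) : EReal) := by
      rw [hcycAB m c, hcycW, zero_add]
      exact EReal.coe_eq_coe_iff.2 (by push_cast; ring)
    exact ⟨m, c, 0, ⟨hedges, hcca⟩, rfl⟩
  have hedgeP : ∀ x y, critEdge A lam x y → ∃ (a b : ℕ) (p : ℝ),
      ((p : ℝ) : EReal) ≤ mpPow B a x y ∧ ((-p : ℝ) : EReal) ≤ mpPow B b y x := by
    rintro x y ⟨m, c, k, ⟨hcy, hcw⟩, hck, hck1⟩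
    have hAne : A (c k) (c (k+1)) ≠ ⊥ := hcy k
    have hBne : B (c k) (c (k+1)) ≠ ⊥ := fun h => hAne ((hBbot _ _).1 h)
    have hBnt : B (c k) (c (k+1)) ≠ ⊤ := hBtop _ _
    set q := (B (c k) (c (k+1))).toReal with hqdef
    have hq : B (c k) (c (k+1)) = (q : EReal) := (EReal.coe_toReal hBnt hBne).symm
    have hc0 : cycWeight B c = 0 := by
      have h3 := hcycAB m c
      rw [hcw] at h3
      have h4 := MP13.ecancel (x := cycWeight B c)
        (c := ((m+1 : ℕ) : ℝ) * lam) (y := ((m : ℝ) + 1) * lam) h3.symm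
      have hXX : (((m : ℝ) + 1) * lam - ((m+1 : ℕ) : ℝ) * lam : ℝ) = 0 := by push_cast; ring
      rw [h4, hXX, EReal.coe_zero]
    refine ⟨1, m, q, ?_, ?_⟩
    · rw [MP13.pow_one_entry B x y, ← hck, ← hck1, hq]
    · have := MP13.cyc_complement B hc0 hq
      rwa [hck, hck1] at this
  have hloopB : ∀ v, critVertex A lam v → ∃ u, B u u = 0 ∧ ∃ (a b : ℕ) (p : ℝ),
      ((p : ℝ) : EReal) ≤ mpPow B a v u ∧ ((-p : ℝ) : EReal) ≤ mpPow B b u v := by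
    intro v hv
    obtain ⟨u, ⟨hscc1, _⟩, hAu⟩ := hdiag v hv
    have hBu : B u u = 0 := by
      rw [hBentry u u, hAu, ← EReal.coe_add]
      norm_num
    refine ⟨u, hBu, ?_⟩
    have hP : ∀ y, Relation.ReflTransGen (critEdge A lam) v y → ∃ (a b : ℕ) (p : ℝ),
        ((p : ℝ) : EReal) ≤ mpPow B a v y ∧ ((-p : ℝ) : EReal) ≤ mpPow B b y v := by
      intro y hy
      induction hy with
      | refl =>
        refine ⟨0, 0, 0, ?_, ?_⟩ <;> simp [mpPow, mpId]
      | @tail b c hstep hedge ih =>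
        obtain ⟨a1, b1, p1, hf1, hb1⟩ := ih
        obtain ⟨a2, b2, p2, hf2, hb2⟩ := hedgeP _ _ hedge
        refine ⟨a1+a2, b2+b1, p1+p2, ?_, ?_⟩
        · calc ((p1+p2 : ℝ) : EReal) = (p1 : EReal) + (p2 : EReal) := EReal.coe_add _ _
          _ ≤ mpPow B a1 v b + mpPow B a2 b c := add_le_add hf1 hf2
          _ ≤ mpPow B (a1+a2) v c := MP13.pow_concat B a1 a2 v b c
        · calc ((-(p1+p2) : ℝ) : EReal) = ((-p2 : ℝ) : EReal) + ((-p1 : ℝ) : EReal) := by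
                have hr : (-(p1+p2) : ℝ) = (-p2) + (-p1) := by ring
                rw [hr, EReal.coe_add]
          _ ≤ mpPow B b2 c b + mpPow B b1 b v := add_le_add hb2 hb1
          _ ≤ mpPow B (b2+b1) c v := MP13.pow_concat B b2 b1 c b v
    exact hP u hscc1
  have hirrB : ∀ i j, ∃ a, mpPow B a i j ≠ ⊥ := by
    intro i j
    have h := hirr i j
    induction h with
    | single hedge =>
      refine ⟨1, ?_⟩
      rw [MP13.pow_one_entry]
      exact fun hb => hedge ((hBbot _ _).1 hb)
    | @tail b c hsteps hedge ih =>
      obtain ⟨a, ha⟩ := ih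
      refine ⟨a+1, ?_⟩
      have hBedge : B b c ≠ ⊥ := fun h => hedge ((hBbot _ _).1 h)
      have hsum : mpPow B a i b + B b c ≠ ⊥ := by
        rw [Ne, EReal.add_eq_bot_iff]
        push_neg
        exact ⟨ha, hBedge⟩
      have hle : mpPow B a i b + B b c ≤ mpPow B (a+1) i c := by
        have h5 := MP13.pow_concat B a 1 i b c
        rwa [MP13.pow_one_entry] at h5
      exact MP13.ne_bot_of_le hsum hle
  have hexB : ∃ v, B v v = 0 := by
    obtain ⟨m, c, hcy, hcw⟩ := hmax.1
    have hcrit : critVertex A lam (c 0) := ⟨m, c, 0, ⟨hcy, hcw⟩, rfl⟩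
    obtain ⟨u, _, hAu⟩ := hdiag _ hcrit
    refine ⟨u, ?_⟩
    rw [hBentry u u, hAu, ← EReal.coe_add]
    norm_num
  obtain ⟨R, hR⟩ := MP13.key_stab hBtop hcycB hzeroB hloopB hirrB hexB
  intro x hxtop hxne
  have hxj : ∃ j, x j ≠ ⊥ := by
    by_contra h
    push_neg at h
    exact hxne (funext fun i => h i)
  obtain ⟨j0, hj0⟩ := hxj
  set u : Fin n → EReal := mpMulVec (mpPow B R) x with hu
  have hRprop := hR R le_rfl
  have huneb : ∀ i, u i ≠ ⊥ := by
    intro i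
    have hterm : mpPow B R i j0 + x j0 ≠ ⊥ := by
      rw [Ne, EReal.add_eq_bot_iff]
      push_neg
      exact ⟨hRprop.1 i j0, hj0⟩
    exact MP13.ne_bot_of_le hterm (le_iSup (fun j => mpPow B R i j + x j) j0)
  have hvec : mpMulVec (mpPow A R) x = fun i => u i + ((((R : ℕ) : ℝ) * lam : ℝ) : EReal) :=
    funext fun i => MP13.vec_of_entry (MP13.powAB hAB R) x i
  refine ⟨R, lam, ?_, ?_⟩
  · rw [hvec]
    intro h
    have h0 := congrFun h ⟨0, hn⟩
    rcases EReal.add_eq_bot_iff.1 h0 with h1 | h1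
    · exact huneb _ h1
    · exact EReal.coe_ne_bot _ h1
  · funext i
    rw [hvec]
    rw [MP13.vec_of_entry hAB _ i]
    rw [MP13.vec_shift B u (((R : ℕ) : ℝ) * lam) i]
    have hstab : mpMulVec B u i = u i := by
      rw [hu, ← MP13.mpVec_assoc, ← MP13.mpPow_succ', hRprop.2]
    rw [hstab]
    rw [add_comm]

end
end
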